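/- arXiv:1210.8365 — 11 statements merged into one kernel-verified Lean document; each statement's English description precedes it below -/
import Mathlib

section
/- For every natural number k, there exists a finite family F of finite simple graphs such that an arbitrary finite simple graph G has threshold-width at most k if and only if no induced subgraph of G is isomorphic to a member of F. -/
open SimpleGraph

/-- The graph `2K₂`: two disjoint edges on four vertices. -/
def twoK2 : SimpleGraph (Fin 4) :=
  SimpleGraph.fromEdgeSet {s(0, 1), s(2, 3)}

/-- A graph is a threshold graph if it has no induced subgraph isomorphic to
`P₄`, `C₄`, or `2K₂`. -/
def IsThresholdGraph {V : Type*} (H : SimpleGraph V) : Prop :=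
  IsEmpty (SimpleGraph.pathGraph 4 ↪g H) ∧ IsEmpty (SimpleGraph.cycleGraph 4 ↪g H) ∧
    IsEmpty (twoK2 ↪g H)

/-- A set of vertices is independent if its members are pairwise nonadjacent. -/
def IsIndepSet {V : Type*} (G : SimpleGraph V) (s : Set V) : Prop :=
  s.Pairwise fun u v => ¬ G.Adj u v

/-- `G` has threshold-width at most `k`: there are `k` independent sets `N i` and a
threshold graph `H` on the same vertex set containing `G` such that every edge of `H`
not in `G` has both endpoints in a common `N i`. -/
def ThresholdWidthAtMost {V : Type*} (G : SimpleGraph V) (k : ℕ) : Prop :=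
  ∃ (N : Fin k → Set V) (H : SimpleGraph V),
    (∀ i, _root_.IsIndepSet G (N i)) ∧ IsThresholdGraph H ∧ G ≤ H ∧
      ∀ x y, H.Adj x y → ¬ G.Adj x y → ∃ i, x ∈ N i ∧ y ∈ N i


/-!
A finite threshold graph has a universal or an isolated vertex; peeling such vertices off lists
the vertices so that each one is adjacent either to all later vertices or to none. Hence a graph
of threshold-width at most `k` is the graph of a word over the finite alphabet
`Prop × Set (Fin k)`: listing `u` before `w`, they are adjacent iff `u` is adjacent to all later
vertices of the threshold graph and no `N i` contains both. Deleting any vertex from a minimal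
obstruction leaves such a graph, so minimal obstructions are graphs of words over a finite
alphabet, in such a way that a subword yields an induced subgraph. By Higman's lemma their words
form a finite antichain, so minimal obstructions have bounded size and there are finitely many.
-/

theorem List.wellQuasiOrdered_sublist {β : Type*} [Finite β] :
    WellQuasiOrdered (fun l₁ l₂ : List β => l₁.Sublist l₂) := by
  have h := (Set.partiallyWellOrderedOn_univ_iff.2 (Finite.wellQuasiOrdered (α := β) (· = ·)))
    |>.partiallyWellOrderedOn_sublistForall₂ (· = ·)
  simp only [Set.mem_univ, implies_true, Set.ofPred_true, Set.partiallyWellOrderedOn_univ_iff]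
    at h
  intro f
  obtain ⟨m, n, hmn, hsub⟩ := h f
  obtain ⟨l, hl, hl'⟩ := List.sublistForall₂_iff.1 hsub
  rw [List.forall₂_eq_eq_eq] at hl
  exact ⟨m, n, hmn, hl ▸ hl'⟩

namespace SimpleGraph

variable {V β γ : Type*} {H : SimpleGraph V}

theorem nonempty_pathGraph_four_embedding {a b c d : V} (hab : H.Adj a b) (hbc : H.Adj b c)
    (hcd : H.Adj c d) (hac : ¬H.Adj a c) (hbd : ¬H.Adj b d) (had : ¬H.Adj a d) :
    Nonempty (pathGraph 4 ↪g H) := by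
  have := hab.ne; have := hbc.ne; have := hcd.ne
  have : a ≠ c := by rintro rfl; exact had hcd
  have : b ≠ d := by rintro rfl; exact had hab
  have : a ≠ d := by rintro rfl; exact hac hcd.symm
  refine ⟨⟨⟨![a, b, c, d], fun i j h => ?_⟩, fun {i j} => ?_⟩⟩
  · fin_cases i <;> fin_cases j <;> simp_all
  · change H.Adj (![a, b, c, d] i) (![a, b, c, d] j) ↔ _
    fin_cases i <;> fin_cases j <;> simp_all [pathGraph_adj, H.adj_comm]

theorem nonempty_cycleGraph_four_embedding {a b c d : V} (hab : H.Adj a b) (hbc : H.Adj b c)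
    (hcd : H.Adj c d) (hda : H.Adj d a) (hac : ¬H.Adj a c) (hbd : ¬H.Adj b d) (nac : a ≠ c)
    (nbd : b ≠ d) : Nonempty (cycleGraph 4 ↪g H) := by
  have := hab.ne; have := hbc.ne; have := hcd.ne; have := hda.ne
  refine ⟨⟨⟨![a, b, c, d], fun i j h => ?_⟩, fun {i j} => ?_⟩⟩
  · fin_cases i <;> fin_cases j <;> simp_all
  · change H.Adj (![a, b, c, d] i) (![a, b, c, d] j) ↔ _
    fin_cases i <;> fin_cases j <;> simp_all [cycleGraph_adj, H.adj_comm] <;> decide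

theorem nonempty_twoK2_embedding {a b c d : V} (hab : H.Adj a b) (hcd : H.Adj c d)
    (hac : ¬H.Adj a c) (had : ¬H.Adj a d) (hbc : ¬H.Adj b c) (hbd : ¬H.Adj b d) :
    Nonempty (twoK2 ↪g H) := by
  have := hab.ne; have := hcd.ne
  have : a ≠ c := by rintro rfl; exact hbc hab.symm
  have : a ≠ d := by rintro rfl; exact hbd hab.symm
  have : b ≠ c := by rintro rfl; exact hac hab
  have : b ≠ d := by rintro rfl; exact had hab
  refine ⟨⟨⟨![a, b, c, d], fun i j h => ?_⟩, fun {i j} => ?_⟩⟩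
  · fin_cases i <;> fin_cases j <;> simp_all
  · change H.Adj (![a, b, c, d] i) (![a, b, c, d] j) ↔ _
    fin_cases i <;> fin_cases j <;> simp_all [twoK2, H.adj_comm]

def wordGraph (δ : β → β → Prop) (w : List β) : SimpleGraph (Fin w.length) :=
  fromRel fun i j => i < j ∧ δ w[i] w[j]

theorem _root_.List.Sublist.nonempty_wordGraph_embedding {w₁ w₂ : List β} (h : w₁.Sublist w₂)
    (δ : β → β → Prop) : Nonempty (wordGraph δ w₁ ↪g wordGraph δ w₂) := by
  obtain ⟨f, hf⟩ := List.sublist_iff_exists_fin_orderEmbedding_get_eq.1 h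
  simp only [List.get_eq_getElem] at hf
  exact ⟨⟨f.toEmbedding, fun {i j} => by simp [wordGraph, ← hf, f.lt_iff_lt]⟩⟩

structure IsWordRepresentation (G : SimpleGraph V) (δ : β → β → Prop) (vs : List V)
    (ℓ : V → β) : Prop where
  nodup : vs.Nodup
  mem : ∀ v, v ∈ vs
  pairwise_adj_iff : vs.Pairwise fun u w => G.Adj u w ↔ δ (ℓ u) (ℓ w)

variable {G : SimpleGraph V} {δ : β → β → Prop} {vs : List V} {ℓ : V → β}

theorem IsWordRepresentation.nil [IsEmpty V] : G.IsWordRepresentation δ [] ℓ :=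
  ⟨List.nodup_nil, isEmptyElim, List.Pairwise.nil⟩

theorem IsWordRepresentation.cons {x : V} {vs : List ({x}ᶜ : Set V)} {ℓ' : ({x}ᶜ : Set V) → β}
    (h : (G.induce {x}ᶜ).IsWordRepresentation δ vs ℓ') {δ' : γ → γ → Prop} {ℓ : V → γ}
    (hℓ : ∀ u w : ({x}ᶜ : Set V), δ (ℓ' u) (ℓ' w) ↔ δ' (ℓ u) (ℓ w))
    (hx : ∀ u : ({x}ᶜ : Set V), G.Adj x u ↔ δ' (ℓ x) (ℓ u)) :
    G.IsWordRepresentation δ' (x :: vs.map (↑)) ℓ where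
  nodup := List.nodup_cons.2 ⟨by simp, h.nodup.map Subtype.val_injective⟩
  mem v := by
    by_cases hv : v = x
    · simp [hv]
    · exact List.mem_cons_of_mem _ (List.mem_map_of_mem (h.mem ⟨v, hv⟩))
  pairwise_adj_iff := List.pairwise_cons.2
    ⟨List.forall_mem_map.2 fun u _ => hx u,
      List.pairwise_map.2 (h.pairwise_adj_iff.imp fun {u w} huw => huw.trans (hℓ u w))⟩

theorem IsWordRepresentation.nonempty_wordGraph_iso (h : G.IsWordRepresentation δ vs ℓ) :
    Nonempty (wordGraph δ (vs.map ℓ) ≃g G) := by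
  classical
  refine ⟨⟨(finCongr (List.length_map ℓ)).trans (h.nodup.getEquivOfForallMemList vs h.mem),
    fun {i j} => ?_⟩⟩
  have hadj := List.pairwise_iff_getElem.1 h.pairwise_adj_iff
  simp only [Equiv.trans_apply, finCongr_apply, List.Nodup.getEquivOfForallMemList_apply,
    List.get_eq_getElem, Fin.val_cast, wordGraph, fromRel_adj, Fin.getElem_fin, List.getElem_map]
  have hi : (i : ℕ) < vs.length := by simpa using i.2
  have hj : (j : ℕ) < vs.length := by simpa using j.2
  rcases lt_trichotomy i j with hij | rfl | hij
  · simpa [hij, hij.ne, hij.not_gt] using hadj i j hi hj hij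
  · simp
  · simpa [hij, hij.ne', hij.not_gt, G.adj_comm] using hadj j i hj hi hij

/-- The apex `x` is listed first with letter `none`; every other vertex `u` gets
`some (a, G.Adj x u)`, where `a` is its letter in `G - x`. -/
def apexRel (δ : β → β → Prop) : Option (β × Prop) → Option (β × Prop) → Prop
  | some a, some b => δ a.1 b.1
  | none, some b => b.2
  | _, none => False

theorem exists_isWordRepresentation_apexRel
    (h : ∀ x, ∃ vs ℓ, (G.induce {x}ᶜ).IsWordRepresentation δ vs ℓ) :
    ∃ vs ℓ, G.IsWordRepresentation (apexRel δ) vs ℓ := by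
  classical
  cases isEmpty_or_nonempty V
  · exact ⟨[], fun _ => none, .nil⟩
  obtain ⟨x⟩ := ‹Nonempty V›
  obtain ⟨vs, ℓ, hx⟩ := h x
  refine ⟨_, fun u => if hu : u = x then none else some (ℓ ⟨u, hu⟩, G.Adj x u),
    hx.cons (fun u w => ?_) fun u => ?_⟩
  · simp [Set.mem_compl_singleton_iff.1 u.2, Set.mem_compl_singleton_iff.1 w.2, apexRel]
  · simp [Set.mem_compl_singleton_iff.1 u.2, apexRel]

section Obstruction

variable {P : ∀ {V : Type}, SimpleGraph V → Prop}

def IsHereditary (P : ∀ {V : Type}, SimpleGraph V → Prop) : Prop :=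
  ∀ ⦃V W : Type⦄ ⦃G : SimpleGraph V⦄ ⦃H : SimpleGraph W⦄, (G ↪g H) → P H → P G

def IsMinimalObstruction (P : ∀ {V : Type}, SimpleGraph V → Prop) {V : Type}
    (G : SimpleGraph V) : Prop :=
  ¬P G ∧ ∀ ⦃W : Type⦄ (H : SimpleGraph W) (f : H ↪g G), ¬Function.Surjective f → P H

theorem IsMinimalObstruction.of_iso (hP : IsHereditary P) {V W : Type} {G : SimpleGraph V}
    {G' : SimpleGraph W} (hG : IsMinimalObstruction P G) (e : G ≃g G') :
    IsMinimalObstruction P G' :=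
  ⟨fun h => hG.1 (hP e.toEmbedding h), fun _ H f hf =>
    hG.2 H (e.symm.toEmbedding.comp f) fun hs => hf fun y => by
      obtain ⟨x, hx⟩ := hs (e.symm y)
      exact ⟨x, by simpa using congrArg e hx⟩⟩

theorem exists_isMinimalObstruction_embedding (hP : IsHereditary P) {V : Type} [Finite V]
    {G : SimpleGraph V} (hG : ¬P G) :
    ∃ (m : ℕ) (F : SimpleGraph (Fin m)), IsMinimalObstruction P F ∧ Nonempty (F ↪g G) := by
  induction h : Nat.card V using Nat.strong_induction_on generalizing V with
  | _ n ih =>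
  by_cases hmin : IsMinimalObstruction P G
  · let e := Iso.map (Finite.equivFin V) G
    exact ⟨_, _, hmin.of_iso hP e, ⟨e.symm.toEmbedding⟩⟩
  obtain ⟨W, H, f, hf, hH⟩ : ∃ (W : Type) (H : SimpleGraph W) (f : H ↪g G),
      ¬Function.Surjective f ∧ ¬P H := by
    simpa [IsMinimalObstruction, hG] using hmin
  have : Finite W := Finite.of_injective f f.injective
  have hlt : Nat.card W < n :=
    h ▸ lt_of_not_ge fun hle => hf (f.injective.bijective_of_nat_card_le hle).2
  obtain ⟨m, F, hF, ⟨g⟩⟩ := ih _ hlt hH rfl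
  exact ⟨m, F, hF, ⟨f.comp g⟩⟩

theorem exists_bound_card_of_forall_wordGraph_iso [Finite β] {δ : β → β → Prop}
    (hrep : ∀ m (F : SimpleGraph (Fin m)), IsMinimalObstruction P F →
      ∃ w : List β, Nonempty (wordGraph δ w ≃g F)) :
    ∃ B, ∀ m (F : SimpleGraph (Fin m)), IsMinimalObstruction P F → m ≤ B := by
  set S := {w : List β | ∃ (m : ℕ) (F : SimpleGraph (Fin m)),
    IsMinimalObstruction P F ∧ Nonempty (wordGraph δ w ≃g F)}
  -- a strict subword would embed one minimal obstruction properly into another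
  have hS : IsAntichain (fun w₁ w₂ => w₁.Sublist w₂) S := by
    rintro w₁ ⟨m₁, F₁, hF₁, ⟨e₁⟩⟩ w₂ ⟨m₂, F₂, hF₂, ⟨e₂⟩⟩ hne hsub
    obtain ⟨g⟩ := hsub.nonempty_wordGraph_embedding δ
    have hlt : w₁.length < w₂.length := lt_of_le_of_ne hsub.length_le (mt hsub.eq_of_length hne)
    refine hF₁.1 (hF₂.2 F₁ (e₂.toEmbedding.comp (g.comp e₁.symm.toEmbedding)) fun hs => ?_)
    have h₁ := Fintype.card_congr e₁.toEquiv
    have h₂ := Fintype.card_congr e₂.toEquiv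
    have := Fintype.card_le_of_surjective _ hs
    simp only [Fintype.card_fin] at h₁ h₂ this
    omega
  obtain ⟨B, hB⟩ := ((hS.finite_of_wellQuasiOrdered List.wellQuasiOrdered_sublist).image
    List.length).bddAbove
  refine ⟨B, fun m F hF => ?_⟩
  obtain ⟨w, ⟨e⟩⟩ := hrep m F hF
  have hm : w.length = m := by simpa using Fintype.card_congr e.toEquiv
  exact hm ▸ hB ⟨w, ⟨m, F, hF, ⟨e⟩⟩, rfl⟩

theorem exists_bound_card_isMinimalObstruction [Finite β] {δ : β → β → Prop}
    (hrep : ∀ {V : Type} [Finite V] (G : SimpleGraph V), P G →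
      ∃ vs ℓ, G.IsWordRepresentation δ vs ℓ) :
    ∃ B, ∀ m (F : SimpleGraph (Fin m)), IsMinimalObstruction P F → m ≤ B := by
  refine exists_bound_card_of_forall_wordGraph_iso (δ := apexRel δ) fun m F hF => ?_
  have hdel (x : Fin m) : P (F.induce {x}ᶜ) :=
    hF.2 _ (Embedding.induce {x}ᶜ) fun hs => (hs x).elim fun y hy => y.2 hy
  obtain ⟨vs, ℓ, h⟩ := exists_isWordRepresentation_apexRel fun x => hrep _ (hdel x)
  exact ⟨_, h.nonempty_wordGraph_iso⟩

theorem exists_finite_forbidden_induced_subgraphs (hP : IsHereditary P) {B : ℕ}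
    (hB : ∀ m (F : SimpleGraph (Fin m)), IsMinimalObstruction P F → m ≤ B) :
    ∃ (ι : Type) (_ : Finite ι) (n : ι → ℕ) (F : ∀ i, SimpleGraph (Fin (n i))),
      ∀ (V : Type) [Finite V] (G : SimpleGraph V), P G ↔ ∀ i, IsEmpty (F i ↪g G) := by
  set S := {p : Σ m, SimpleGraph (Fin m) | IsMinimalObstruction P p.2}
  have hS : S.Finite :=
    ((Set.finite_Iic B).biUnion fun m _ => Set.finite_range (Sigma.mk m)).subset
      fun p hp => Set.mem_biUnion (hB _ _ hp) ⟨p.2, rfl⟩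
  refine ⟨S, hS.to_subtype, fun p => p.1.1, fun p => p.1.2, fun V _ G =>
    ⟨fun hG p => ⟨fun f => p.2.1 (hP f hG)⟩, fun h => ?_⟩⟩
  by_contra hG
  obtain ⟨m, F, hF, ⟨f⟩⟩ := exists_isMinimalObstruction_embedding hP hG
  exact (h ⟨⟨m, F⟩, hF⟩).false f

end Obstruction

end SimpleGraph

section Threshold

variable {V W : Type*} {H : SimpleGraph V}

theorem IsThresholdGraph.of_embedding {H' : SimpleGraph W} (f : H ↪g H')
    (h : IsThresholdGraph H') : IsThresholdGraph H :=
  ⟨⟨fun g => h.1.false (f.comp g)⟩, ⟨fun g => h.2.1.false (f.comp g)⟩,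
    ⟨fun g => h.2.2.false (f.comp g)⟩⟩

/-- Otherwise a neighbour of `v` other than `w` and not adjacent to `w` would induce a `P₄`, `C₄`
or `2K₂` together with `u`, `v` and `w`. -/
theorem IsThresholdGraph.neighborSet_subset_insert {u v w : V} (hH : IsThresholdGraph H)
    (huv : ¬H.Adj u v) (hne : u ≠ v) (huw : H.Adj u w) :
    H.neighborSet v ⊆ insert w (H.neighborSet w) := by
  intro y hvy
  by_contra hy
  simp only [Set.mem_insert_iff, mem_neighborSet, not_or] at hy hvy
  obtain ⟨hyw, hwy⟩ := hy
  by_cases huy : H.Adj u y <;> by_cases hvw : H.Adj v w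
  · exact hH.2.1.false (nonempty_cycleGraph_four_embedding huy hvy.symm hvw huw.symm huv
      (fun h => hwy h.symm) hne hyw).some
  · exact hH.1.false (nonempty_pathGraph_four_embedding huw.symm huy hvy.symm hwy huv
      (fun h => hvw h.symm)).some
  · exact hH.1.false (nonempty_pathGraph_four_embedding huw hvw.symm hvy huv hwy huy).some
  · exact hH.2.2.false (nonempty_twoK2_embedding huw hvy huv huy (fun h => hvw h.symm)
      hwy).some

theorem IsThresholdGraph.exists_universal_or_isolated [Finite V] [Nonempty V]
    (hH : IsThresholdGraph H) : ∃ v, (∀ u, u ≠ v → H.Adj v u) ∨ ∀ u, ¬H.Adj v u := by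
  classical
  have := Fintype.ofFinite V
  obtain ⟨v, hv⟩ := Finite.exists_max fun z => H.degree z
  -- a neighbour `w` of a non-neighbour `u` of `v` would have larger degree than `v`
  by_cases hvuniv : ∀ u, u ≠ v → H.Adj v u
  · exact ⟨v, Or.inl hvuniv⟩
  push Not at hvuniv
  obtain ⟨u, hne, huv⟩ := hvuniv
  refine ⟨u, Or.inr fun w huw => ?_⟩
  have hsub : (H.neighborFinset v).erase w ⊂ (H.neighborFinset w).erase v := by
    refine (Finset.ssubset_iff_of_subset fun y hy => ?_).2 ⟨u, ?_, ?_⟩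
    · simp only [Finset.mem_erase, mem_neighborFinset] at hy ⊢
      have := hH.neighborSet_subset_insert (huv ·.symm) hne huw hy.2
      exact ⟨hy.2.ne', (Set.mem_insert_iff.1 this).resolve_left hy.1⟩
    · simpa [hne] using huw.symm
    · simp [huv]
  have hlt := Finset.card_lt_card hsub
  rw [Finset.card_erase_eq_ite, Finset.card_erase_eq_ite] at hlt
  simp only [mem_neighborFinset, card_neighborFinset_eq_degree, H.adj_comm w v] at hlt
  have := hv w
  split_ifs at hlt <;> omega

theorem IsThresholdGraph.exists_isWordRepresentation [Finite V] (hH : IsThresholdGraph H) :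
    ∃ (vs : List V) (c : V → Prop), H.IsWordRepresentation (fun p _ => p) vs c := by
  induction h : Nat.card V using Nat.strong_induction_on generalizing V with
  | _ n ih =>
  classical
  cases isEmpty_or_nonempty V
  · exact ⟨[], fun _ => True, .nil⟩
  obtain ⟨x, p, hx⟩ : ∃ x, ∃ p : Prop, ∀ u, u ≠ x → (H.Adj x u ↔ p) := by
    obtain ⟨x, hx | hx⟩ := hH.exists_universal_or_isolated
    exacts [⟨x, True, fun u hu => iff_true_intro (hx u hu)⟩,
      ⟨x, False, fun u _ => iff_false_intro (hx u)⟩]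
  have hlt : Nat.card ({x}ᶜ : Set V) < n :=
    h ▸ Finite.card_subtype_lt (p := (· ∈ ({x}ᶜ : Set V))) (x := x) (by simp)
  obtain ⟨vs, c, hvs⟩ := ih _ hlt (hH.of_embedding (Embedding.induce {x}ᶜ)) rfl
  refine ⟨_, fun u => if hu : u = x then p else c ⟨u, hu⟩,
    hvs.cons (fun u w => ?_) fun u => ?_⟩
  · simp [Set.mem_compl_singleton_iff.1 u.2]
  · simpa [Set.mem_compl_singleton_iff.1 u.2] using hx u u.2

end Threshold

theorem ThresholdWidthAtMost.of_embedding {V W : Type*} {G : SimpleGraph V}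
    {G' : SimpleGraph W} {k : ℕ} (f : G ↪g G') (h : ThresholdWidthAtMost G' k) :
    ThresholdWidthAtMost G k := by
  obtain ⟨N, H, hN, hH, hGH, hcover⟩ := h
  refine ⟨fun i => f ⁻¹' N i, H.comap f, fun i u hu w hw hne hadj => ?_,
    hH.of_embedding (Embedding.comap f.toEmbedding H), fun u w huw => hGH (f.map_adj_iff.2 huw),
    fun u w huw hG => hcover _ _ huw (mt f.map_adj_iff.1 hG)⟩
  exact hN i hu hw (f.injective.ne hne) (f.map_adj_iff.2 hadj)

/-- The letter of a vertex `v` records whether `v` is adjacent in the threshold graph `H` to all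
later vertices, and which of the independent sets `N i` contain `v`. -/
def thresholdWidthRel (k : ℕ) (a b : Prop × Set (Fin k)) : Prop :=
  a.1 ∧ Disjoint a.2 b.2

theorem ThresholdWidthAtMost.exists_isWordRepresentation {V : Type*} [Finite V]
    {G : SimpleGraph V} {k : ℕ} (h : ThresholdWidthAtMost G k) :
    ∃ vs ℓ, G.IsWordRepresentation (thresholdWidthRel k) vs ℓ := by
  obtain ⟨N, H, hN, hH, hGH, hcover⟩ := h
  obtain ⟨vs, c, hvs⟩ := hH.exists_isWordRepresentation
  refine ⟨vs, fun v => (c v, {i | v ∈ N i}), hvs.nodup, hvs.mem,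
    (hvs.nodup.and hvs.pairwise_adj_iff).imp fun {u w} ⟨hne, huw⟩ => ?_⟩
  simp only [thresholdWidthRel, Set.disjoint_left, Set.mem_ofPred_eq]
  constructor
  · exact fun hG => ⟨huw.1 (hGH hG), fun i hu hw => hN i hu hw hne hG⟩
  · rintro ⟨hc, hdisj⟩
    by_contra hG
    obtain ⟨i, hu, hw⟩ := hcover u w (huw.2 hc) hG
    exact hdisj hu hw

/-- For every `k` there is a finite family of finite graphs such that a finite graph has
threshold-width at most `k` iff it has no induced subgraph isomorphic to a member of
the family. -/
theorem thresholdWidth_finitely_many_obstructions (k : ℕ) :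
    ∃ (ι : Type) (_ : Finite ι) (n : ι → ℕ) (F : ∀ i : ι, SimpleGraph (Fin (n i))),
      ∀ (V : Type) (_ : Fintype V) (G : SimpleGraph V),
        ThresholdWidthAtMost G k ↔ ∀ i : ι, IsEmpty (F i ↪g G) := by
  have hP : IsHereditary fun G => ThresholdWidthAtMost G k :=
    fun _ _ _ _ f h => h.of_embedding f
  obtain ⟨B, hB⟩ := exists_bound_card_isMinimalObstruction
    (P := fun G => ThresholdWidthAtMost G k) fun _ h => h.exists_isWordRepresentation
  obtain ⟨ι, hι, n, F, hF⟩ := exists_finite_forbidden_induced_subgraphs hP hB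
  exact ⟨ι, hι, n, F, fun V _ G => hF V G⟩
end

section
/- Let G be a finite simple graph, let A and B be disjoint sets of vertices of G, and let N_1,…,N_k be independent sets of G such that for every a ∈ A and b ∈ B with a not adjacent to b there exists i with both a ∈ N_i and b ∈ N_i. Then the A × B submatrix of the adjacency matrix of G, regarded as a matrix over the two-element field GF(2), has rank at most 2^k. -/
/-!
Over any commutative ring, `[a ~ b] = ∏ i, (1 - χᵢ(a) χᵢ(b))` where `χᵢ` is the indicator of
`N i`: an edge has no endpoint pair inside an independent set, and a non-edge between `A` and `B`
has both endpoints in some `N i`. Expanding the product over the subsets `t` of `Fin k` factors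
the matrix through `2 ^ k` coordinates: `[a ~ b] = ∑ₜ (∏_{i ∈ t} -χᵢ(a)) (∏_{i ∈ t} χᵢ(b))`.
-/

open SimpleGraph

namespace Matrix

variable {ι m n R : Type*} [Fintype ι]

theorem of_prod_one_add_mul_eq_mul [Fintype n] [CommSemiring R] (f : ι → m → R)
    (g : ι → n → R) :
    of (fun a b => ∏ i, (1 + f i a * g i b)) =
      of (fun a (t : Finset ι) => ∏ i ∈ t, f i a) * of fun t b => ∏ i ∈ t, g i b := by
  ext a b
  simp only [of_apply, mul_apply, Finset.prod_one_add, Finset.powerset_univ,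
    Finset.prod_mul_distrib]

theorem rank_of_prod_one_add_mul_le [Fintype n] [CommSemiring R] [StrongRankCondition R]
    (f : ι → m → R) (g : ι → n → R) :
    (of fun a b => ∏ i, (1 + f i a * g i b)).rank ≤ 2 ^ Fintype.card ι := by
  rw [of_prod_one_add_mul_eq_mul]
  calc _ ≤ _ := rank_mul_le_left _ _
    _ ≤ Fintype.card (Finset ι) := rank_le_card_width _
    _ = 2 ^ Fintype.card ι := Fintype.card_finset

end Matrix

theorem SimpleGraph.ite_adj_eq_prod_one_sub_indicator {V ι R : Type*} [Fintype ι] [CommRing R]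
    (G : SimpleGraph V) [DecidableRel G.Adj] (N : ι → Set V)
    (hindep : ∀ i, _root_.IsIndepSet G (N i)) {a b : V}
    (hcover : ¬ G.Adj a b → ∃ i, a ∈ N i ∧ b ∈ N i) :
    (if G.Adj a b then 1 else 0 : R) =
      ∏ i, (1 - (N i).indicator 1 a * (N i).indicator 1 b) := by
  by_cases hab : G.Adj a b
  · rw [if_pos hab, eq_comm]
    refine Finset.prod_eq_one fun i _ => ?_
    by_cases ha : a ∈ N i
    · have hb : b ∉ N i := fun hb => hindep i ha hb hab.ne hab
      simp [Set.indicator_of_notMem hb]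
    · simp [Set.indicator_of_notMem ha]
  · obtain ⟨i, hai, hbi⟩ := hcover hab
    rw [if_neg hab, eq_comm]
    exact Finset.prod_eq_zero (Finset.mem_univ i) (by simp [hai, hbi])

theorem rank_submatrix_le_two_pow_general {V : Type*}
    (G : SimpleGraph V) [DecidableRel G.Adj] (A B : Finset V)
    (k : ℕ) (N : Fin k → Set V) (hindep : ∀ i, _root_.IsIndepSet G (N i))
    (hcover : ∀ a ∈ A, ∀ b ∈ B, ¬ G.Adj a b → ∃ i, a ∈ N i ∧ b ∈ N i) :
    Matrix.rank
      (Matrix.of fun (a : A) (b : B) => if G.Adj a b then (1 : ZMod 2) else 0)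
      ≤ 2 ^ k := by
  have hfactor : (Matrix.of fun (a : A) (b : B) => if G.Adj a b then (1 : ZMod 2) else 0) =
      Matrix.of fun (a : A) (b : B) =>
        ∏ i, (1 + -(N i).indicator 1 (a : V) * (N i).indicator 1 (b : V)) := by
    ext a b
    rw [Matrix.of_apply, Matrix.of_apply, G.ite_adj_eq_prod_one_sub_indicator N hindep
      (hcover a a.2 b b.2)]
    simp only [neg_mul, ← sub_eq_add_neg]
  rw [hfactor]
  exact (Matrix.rank_of_prod_one_add_mul_le _ _).trans_eq (by simp)

/-- If all nonadjacencies between disjoint vertex sets `A` and `B` are covered by `k`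
independent sets, then the `A × B` submatrix of the adjacency matrix has rank at most
`2 ^ k` over `GF(2)`. -/
theorem rank_submatrix_le_two_pow {V : Type*} [Fintype V] [DecidableEq V]
    (G : SimpleGraph V) [DecidableRel G.Adj] (A B : Finset V) (hAB : Disjoint A B)
    (k : ℕ) (N : Fin k → Set V) (hindep : ∀ i, _root_.IsIndepSet G (N i))
    (hcover : ∀ a ∈ A, ∀ b ∈ B, ¬ G.Adj a b → ∃ i, a ∈ N i ∧ b ∈ N i) :
    Matrix.rank
      (Matrix.of fun (a : A) (b : B) => if G.Adj a b then (1 : ZMod 2) else 0)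
      ≤ 2 ^ k :=
  rank_submatrix_le_two_pow_general G A B k N hindep hcover
end

section
/- Let x be an isolated vertex of a finite simple graph G. Then G has threshold-width at most k if and only if the graph G − x obtained by deleting x has threshold-width at most k. -/
open SimpleGraph

/-! Deleting a vertex is passing to an induced subgraph, which keeps a witness for threshold-width.
Conversely, `G` is the pushforward of `G - x` along the inclusion, and a pushforward along an
injection keeps a witness too: `P₄`, `C₄` and `2K₂` have no isolated vertices, so a copy of one of
them in the pushed-forward threshold graph avoids the new vertices. -/

namespace SimpleGraph

/-- Every vertex of `K` lies on an edge, and every edge of `H.map f` lies in the range of `f`. -/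
lemma nonempty_embedding_of_embedding_map {P W V : Type*} {K : SimpleGraph P}
    {H : SimpleGraph W} (f : W ↪ V) (hK : ∀ p, ∃ q, K.Adj p q) (e : K ↪g H.map f) :
    Nonempty (K ↪g H) := by
  have hrange : ∀ p, ∃ w, f w = e p := fun p => by
    obtain ⟨q, hpq⟩ := hK p
    obtain ⟨a, -, -, ha, -⟩ := (map_adj f H _ _).mp (e.map_rel_iff.mpr hpq)
    exact ⟨a, ha⟩
  choose g hg using hrange
  have hadj : ∀ p q, H.Adj (g p) (g q) ↔ K.Adj p q := fun p q => by
    rw [← e.map_rel_iff, ← hg p, ← hg q, map_adj]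
    simp only [f.injective.eq_iff, exists_eq_right_right, exists_eq_right]
  refine ⟨⟨⟨g, fun p q h => e.injective ?_⟩, hadj _ _⟩⟩
  rw [← hg p, ← hg q, h]

lemma map_induce_eq_of_adj_mem {V : Type*} {G : SimpleGraph V} {s : Set V}
    (hs : ∀ u v, G.Adj u v → u ∈ s) : (G.induce s).map (Function.Embedding.subtype _) = G := by
  refine le_antisymm (map_comap_le _ _) fun u v h => ?_
  exact (map_adj _ _ _ _).mpr ⟨⟨u, hs u v h⟩, ⟨v, hs v u h.symm⟩, h, rfl, rfl⟩

end SimpleGraph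

lemma pathGraph_four_adj_exists : ∀ p, ∃ q, (pathGraph 4).Adj p q := by
  simp only [pathGraph_adj]
  decide

lemma cycleGraph_four_adj_exists : ∀ p, ∃ q, (cycleGraph 4).Adj p q := by
  decide

lemma twoK2_adj_exists : ∀ p, ∃ q, twoK2.Adj p q := by
  unfold twoK2
  decide

namespace IsThresholdGraph

variable {V W : Type*}

lemma of_embedding_s5 {H : SimpleGraph V} {H' : SimpleGraph W} (hH : IsThresholdGraph H)
    (e : H' ↪g H) : IsThresholdGraph H' := by
  obtain ⟨hP, hC, h2⟩ := hH
  exact ⟨⟨fun e' => hP.elim (e'.trans e)⟩, ⟨fun e' => hC.elim (e'.trans e)⟩,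
    ⟨fun e' => h2.elim (e'.trans e)⟩⟩

lemma map {H : SimpleGraph W} (hH : IsThresholdGraph H) (f : W ↪ V) :
    IsThresholdGraph (H.map f) := by
  obtain ⟨hP, hC, h2⟩ := hH
  exact ⟨⟨fun e => hP.elim
      (nonempty_embedding_of_embedding_map f pathGraph_four_adj_exists e).some⟩,
    ⟨fun e => hC.elim (nonempty_embedding_of_embedding_map f cycleGraph_four_adj_exists e).some⟩,
    ⟨fun e => h2.elim (nonempty_embedding_of_embedding_map f twoK2_adj_exists e).some⟩⟩

end IsThresholdGraph

namespace ThresholdWidthAtMost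

variable {V W : Type*} {k : ℕ}

lemma induce {G : SimpleGraph V} (hG : ThresholdWidthAtMost G k) (s : Set V) :
    ThresholdWidthAtMost (G.induce s) k := by
  obtain ⟨N, H, hN, hH, hle, hcov⟩ := hG
  refine ⟨fun i => Subtype.val ⁻¹' N i, H.induce s, fun i u hu v hv huv => ?_,
    hH.of_embedding_s5 (Embedding.induce s), fun u v h => hle h,
    fun u v h hG => hcov u v h hG⟩
  exact hN i hu hv (Subtype.val_injective.ne huv)

lemma map {G : SimpleGraph W} (hG : ThresholdWidthAtMost G k) (f : W ↪ V) :
    ThresholdWidthAtMost (G.map f) k := by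
  obtain ⟨N, H, hN, hH, hle, hcov⟩ := hG
  refine ⟨fun i => f '' N i, H.map f, ?_, hH.map f, map_monotone f hle, ?_⟩
  · rintro i _ ⟨u, hu, rfl⟩ _ ⟨v, hv, rfl⟩ huv
    rw [map_adj_apply]
    exact hN i hu hv (ne_of_apply_ne f huv)
  · rintro _ _ ⟨-, a, b, hab, rfl, rfl⟩ hG
    obtain ⟨i, ha, hb⟩ := hcov a b hab (by rwa [← map_adj_apply (f := f)])
    exact ⟨i, ⟨a, ha, rfl⟩, ⟨b, hb, rfl⟩⟩

end ThresholdWidthAtMost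

theorem thresholdWidthAtMost_delete_isolated_general {V : Type*}
    (G : SimpleGraph V) (x : V) (hx : ∀ y, ¬ G.Adj x y) (k : ℕ) :
    ThresholdWidthAtMost G k ↔ ThresholdWidthAtMost (G.induce {x}ᶜ) k := by
  refine ⟨fun hG => hG.induce _, fun hG => ?_⟩
  have hedges : ∀ u v, G.Adj u v → u ∈ ({x}ᶜ : Set V) := by
    rintro u v h rfl
    exact hx v h
  rw [← map_induce_eq_of_adj_mem hedges]
  exact hG.map _

/-- Deleting an isolated vertex does not change whether the threshold-width is at most `k`. -/
theorem thresholdWidthAtMost_delete_isolated {V : Type*} [Fintype V] [DecidableEq V]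
    (G : SimpleGraph V) (x : V) (hx : ∀ y, ¬ G.Adj x y) (k : ℕ) :
    ThresholdWidthAtMost G k ↔ ThresholdWidthAtMost (G.induce {x}ᶜ) k :=
  thresholdWidthAtMost_delete_isolated_general G x hx k
end

section
/- Let G be a finite simple graph on n ≥ 1 vertices and let G′ be the graph obtained from G by adding a set C of n² new vertices forming a clique, each adjacent to every vertex of G, together with one further new vertex ω adjacent to exactly the vertices of G (so ω is adjacent to no vertex of C). Then the threshold-width of G′ equals the 𝔗-width of G. -/
open SimpleGraph

/-- The threshold-width of `G`: the least `k` such that `G` has threshold-width at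
most `k`. -/
noncomputable def thresholdWidth {V : Type*} (G : SimpleGraph V) : ℕ :=
  sInf {k | ThresholdWidthAtMost G k}

/-- `G` has 𝔗-width at most `k`: there are `k` independent sets covering every
nonadjacent pair of distinct vertices. -/
def TWidthAtMost {V : Type*} (G : SimpleGraph V) (k : ℕ) : Prop :=
  ∃ N : Fin k → Set V, (∀ i, _root_.IsIndepSet G (N i)) ∧
    ∀ x y : V, x ≠ y → ¬ G.Adj x y → ∃ i, x ∈ N i ∧ y ∈ N i

/-- The 𝔗-width of `G`. -/
noncomputable def tWidth {V : Type*} (G : SimpleGraph V) : ℕ :=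
  sInf {k | TWidthAtMost G k}

/-- The graph `G'` obtained from `G` (on `n` vertices) by adding a clique `C` of `n ^ 2`
new vertices, all adjacent to all of `G`, and one further vertex `ω` adjacent exactly to
the vertices of `G`. -/
def auxGraph {V : Type*} [Fintype V] (G : SimpleGraph V) :
    SimpleGraph (V ⊕ (Fin (Fintype.card V ^ 2) ⊕ Unit)) :=
  SimpleGraph.fromRel fun a b =>
    match a, b with
    | Sum.inl u, Sum.inl v => G.Adj u v
    | Sum.inl _, Sum.inr _ => True
    | Sum.inr (Sum.inl _), Sum.inr (Sum.inl _) => True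
    | _, _ => False

/-! The width bound `k` can only be met with `k ≥ n²` or with `ω` nonadjacent in `H` to some
clique vertex `c`: otherwise the `n²` pairs `{ω, c}` would need `n²` distinct independent sets,
one per vertex of the clique. Given such a `c`, for nonadjacent `u, v` of `G` the cycle
`u ω v c` of `H` has the chord `uv`, because `ωc` is missing and `H` has no induced `C₄`; so
the sets `N i ∩ V` cover the non-edges of `G`. Conversely, joining all of `V` into a clique
makes `G'` a graph whose non-edges all pass through `ω`, which is a threshold graph. -/

section General

variable {V W : Type*}

lemma IsIndepSet.preimage {G : SimpleGraph V} {G' : SimpleGraph W} (f : G ↪g G') {s : Set W}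
    (hs : _root_.IsIndepSet G' s) : _root_.IsIndepSet G (f ⁻¹' s) :=
  fun _ hx _ hy hxy hadj => hs hx hy (f.injective.ne hxy) (f.map_adj_iff.mpr hadj)

lemma IsIndepSet.image {G : SimpleGraph V} {G' : SimpleGraph W} (f : G ↪g G') {s : Set V}
    (hs : _root_.IsIndepSet G s) : _root_.IsIndepSet G' (f '' s) := by
  rintro _ ⟨x, hx, rfl⟩ _ ⟨y, hy, rfl⟩ hxy hadj
  exact hs hx hy (fun h => hxy (h ▸ rfl)) (f.map_adj_iff.mp hadj)

lemma card_le_of_pairwise_adj_of_indepSet_cover [Fintype V] {G : SimpleGraph W} {k : ℕ}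
    {N : Fin k → Set W} (hN : ∀ i, _root_.IsIndepSet G (N i)) {s : V → W}
    (hs : Pairwise fun a b => G.Adj (s a) (s b)) (hcov : ∀ a, ∃ i, s a ∈ N i) :
    Fintype.card V ≤ k := by
  choose g hg using hcov
  have hg_inj : g.Injective := fun a b hab => by
    by_contra hne
    exact hN (g a) (hg a) (hab ▸ hg b) (hs hne).ne (hs hne)
  simpa using Fintype.card_le_of_injective g hg_inj

lemma tWidthAtMost_of_card_sq_le [Fintype V] (G : SimpleGraph V) {k : ℕ}
    (hk : Fintype.card V ^ 2 ≤ k) : TWidthAtMost G k := by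
  obtain ⟨e⟩ : Nonempty (V × V ↪ Fin k) :=
    Function.Embedding.nonempty_of_card_le (by simpa [Fintype.card_prod, sq] using hk)
  refine ⟨fun i => {x | ∃ p : V × V, e p = i ∧ ¬G.Adj p.1 p.2 ∧ (x = p.1 ∨ x = p.2)}, ?_, ?_⟩
  · rintro i x ⟨p, rfl, hp, hx⟩ y ⟨q, hq, -, hy⟩ hxy
    obtain rfl := e.injective hq
    rcases hx with rfl | rfl <;> rcases hy with rfl | rfl
    exacts [absurd rfl hxy, hp, fun h => hp h.symm, absurd rfl hxy]
  · exact fun x y _ hxy => ⟨e (x, y), ⟨_, rfl, hxy, .inl rfl⟩, ⟨_, rfl, hxy, .inr rfl⟩⟩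

/-- Each of the three forbidden graphs on `Fin 4` misses the disjoint edges `02` and `13`,
and two disjoint non-edges cannot both pass through `ω`. -/
lemma isThresholdGraph_of_not_adj_imp {H : SimpleGraph W} (ω : W)
    (h : ∀ x y, x ≠ y → ¬H.Adj x y → x = ω ∨ y = ω) : IsThresholdGraph H := by
  have key (F : SimpleGraph (Fin 4)) (h02 : ¬F.Adj 0 2) (h13 : ¬F.Adj 1 3) :
      IsEmpty (F ↪g H) := by
    refine ⟨fun f => ?_⟩
    have hf {i j : Fin 4} (hij : i ≠ j) (hF : ¬F.Adj i j) : f i = ω ∨ f j = ω :=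
      h _ _ (f.injective.ne hij) (mt f.map_adj_iff.mp hF)
    rcases hf (by decide) h02 with h1 | h1 <;> rcases hf (by decide) h13 with h2 | h2 <;>
      exact absurd (f.injective (h1.trans h2.symm)) (by decide)
  refine ⟨key _ ?_ ?_, key _ (by decide) (by decide), key _ ?_ ?_⟩ <;>
    simp [pathGraph_adj, twoK2, Sym2.eq, Sym2.rel_iff']

lemma IsThresholdGraph.adj_or_adj_of_cycle {H : SimpleGraph W} (hH : IsThresholdGraph H)
    {a b c d : W} (hab : H.Adj a b) (hbc : H.Adj b c) (hcd : H.Adj c d) (hda : H.Adj d a)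
    (hac : a ≠ c) (hbd : b ≠ d) : H.Adj a c ∨ H.Adj b d := by
  by_contra! ⟨hac', hbd'⟩
  have := hab.ne; have := hbc.ne; have := hcd.ne; have := hda.ne
  refine hH.2.1.false ⟨⟨![a, b, c, d], fun i j hij => ?_⟩, fun {i j} => ?_⟩
  · fin_cases i <;> fin_cases j <;> simp_all [eq_comm]
  · change H.Adj (![a, b, c, d] i) (![a, b, c, d] j) ↔ (cycleGraph 4).Adj i j
    fin_cases i <;> fin_cases j <;>
      simp_all [cycleGraph, H.adj_comm] <;> decide

end General

section AuxGraph

variable {V : Type*} [Fintype V] {G : SimpleGraph V}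

local notation "ω" => (Sum.inr (Sum.inr ()) : V ⊕ (Fin (Fintype.card V ^ 2) ⊕ Unit))

@[simp]
lemma auxGraph_adj_inl_inl {u v : V} :
    (auxGraph G).Adj (.inl u) (.inl v) ↔ G.Adj u v := by
  simpa [auxGraph, G.adj_comm] using fun h => G.ne_of_adj h

@[simp]
lemma auxGraph_adj_inl_inr (u : V) (x : Fin (Fintype.card V ^ 2) ⊕ Unit) :
    (auxGraph G).Adj (.inl u) (.inr x) := by
  simp [auxGraph]

@[simp]
lemma auxGraph_adj_inr_inl (u : V) (x : Fin (Fintype.card V ^ 2) ⊕ Unit) :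
    (auxGraph G).Adj (.inr x) (.inl u) :=
  (auxGraph_adj_inl_inr u x).symm

@[simp]
lemma auxGraph_adj_clique {c c' : Fin (Fintype.card V ^ 2)} :
    (auxGraph G).Adj (.inr (.inl c)) (.inr (.inl c')) ↔ c ≠ c' := by
  simp [auxGraph]

@[simp]
lemma auxGraph_not_adj_omega_clique (c : Fin (Fintype.card V ^ 2)) :
    ¬(auxGraph G).Adj ω (.inr (.inl c)) := by
  simp [auxGraph]

@[simp]
lemma auxGraph_not_adj_clique_omega (c : Fin (Fintype.card V ^ 2)) :
    ¬(auxGraph G).Adj (.inr (.inl c)) ω :=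
  fun h => auxGraph_not_adj_omega_clique c h.symm

variable (G) in
def embeddingAuxGraph : G ↪g auxGraph G where
  toFun := Sum.inl
  inj' := Sum.inl_injective
  map_rel_iff' := auxGraph_adj_inl_inl

lemma auxGraph_mono {G' : SimpleGraph V} (h : G ≤ G') : auxGraph G ≤ auxGraph G' := by
  rintro (u | c | ⟨⟨⟩⟩) (v | c' | ⟨⟨⟩⟩) hadj
  · exact auxGraph_adj_inl_inl.mpr (h (auxGraph_adj_inl_inl.mp hadj))
  all_goals simp_all

lemma auxGraph_top_not_adj {x y : V ⊕ (Fin (Fintype.card V ^ 2) ⊕ Unit)} (hxy : x ≠ y)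
    (h : ¬(auxGraph ⊤).Adj x y) : x = ω ∨ y = ω := by
  rcases x with u | c | ⟨⟨⟩⟩ <;> rcases y with v | c' | ⟨⟨⟩⟩ <;> simp_all

lemma auxGraph_top_adj_of_not_adj {x y : V ⊕ (Fin (Fintype.card V ^ 2) ⊕ Unit)}
    (h : (auxGraph ⊤).Adj x y) (hG : ¬(auxGraph G).Adj x y) :
    ∃ u v, x = .inl u ∧ y = .inl v ∧ u ≠ v ∧ ¬G.Adj u v := by
  rcases x with u | c | ⟨⟨⟩⟩ <;> rcases y with v | c' | ⟨⟨⟩⟩ <;> simp_all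

lemma TWidthAtMost.thresholdWidthAtMost_auxGraph {k : ℕ} (hG : TWidthAtMost G k) :
    ThresholdWidthAtMost (auxGraph G) k := by
  obtain ⟨N, hN, hcov⟩ := hG
  refine ⟨fun i => .inl '' N i, auxGraph ⊤, fun i => (hN i).image (embeddingAuxGraph G),
    isThresholdGraph_of_not_adj_imp ω fun _ _ => auxGraph_top_not_adj,
    auxGraph_mono le_top, fun x y hxy hG => ?_⟩
  obtain ⟨u, v, rfl, rfl, huv, hG⟩ := auxGraph_top_adj_of_not_adj hxy hG
  obtain ⟨i, hu, hv⟩ := hcov u v huv hG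
  exact ⟨i, ⟨u, hu, rfl⟩, ⟨v, hv, rfl⟩⟩

lemma ThresholdWidthAtMost.tWidthAtMost_of_auxGraph {k : ℕ}
    (hG : ThresholdWidthAtMost (auxGraph G) k) : TWidthAtMost G k := by
  obtain ⟨N, H, hN, hH, hle, hcov⟩ := hG
  by_cases hk : Fintype.card V ^ 2 ≤ k
  · exact tWidthAtMost_of_card_sq_le G hk
  obtain ⟨c, hc⟩ : ∃ c, ¬H.Adj ω (.inr (.inl c)) := by
    by_contra! hall
    have hclique_le := card_le_of_pairwise_adj_of_indepSet_cover hN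
      (s := fun c : Fin (Fintype.card V ^ 2) => .inr (.inl c))
      (fun _ _ hcc' => auxGraph_adj_clique.mpr hcc')
      fun c => (hcov _ _ (hall c) (auxGraph_not_adj_omega_clique c)).imp fun _ => And.right
    exact hk (by simpa using hclique_le)
  refine ⟨fun i => embeddingAuxGraph G ⁻¹' N i, fun i => (hN i).preimage _,
    fun u v huv hG => hcov _ _ ?_ (mt auxGraph_adj_inl_inl.mp hG)⟩
  have hcycle : H.Adj (.inl u) (.inl v) ∨ H.Adj ω (.inr (.inl c)) :=
    hH.adj_or_adj_of_cycle (hle (auxGraph_adj_inl_inr u _)) (hle (auxGraph_adj_inr_inl v _))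
      (hle (auxGraph_adj_inl_inr v _)) (hle (auxGraph_adj_inr_inl u _)) (by simpa using huv)
      (by simp)
  exact hcycle.resolve_right hc

lemma thresholdWidthAtMost_auxGraph_iff {k : ℕ} :
    ThresholdWidthAtMost (auxGraph G) k ↔ TWidthAtMost G k :=
  ⟨(·.tWidthAtMost_of_auxGraph), (·.thresholdWidthAtMost_auxGraph)⟩

end AuxGraph

theorem thresholdWidth_auxGraph_general {V : Type*} [Fintype V] (G : SimpleGraph V) :
    thresholdWidth (auxGraph G) = tWidth G := by
  simp only [thresholdWidth, tWidth, thresholdWidthAtMost_auxGraph_iff]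

/-- The threshold-width of the augmented graph `G'` equals the 𝔗-width of `G`. -/
theorem thresholdWidth_auxGraph {V : Type*} [Fintype V] (G : SimpleGraph V)
    (hV : 1 ≤ Fintype.card V) :
    thresholdWidth (auxGraph G) = tWidth G :=
  thresholdWidth_auxGraph_general G
end

section
/- Every finite simple graph of threshold-width at most k has a well-linked witness with k independent sets: if G has threshold-width at most k, then there exist independent sets N_1,…,N_k of G and a threshold graph H on the same vertex set with E(G) ⊆ E(H), such that every edge of H not in G has both endpoints in some common N_i, and moreover for every i ∈ {1,…,k}, every vertex x ∉ N_i has a neighbor in N_i. -/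
open SimpleGraph

/-! Enlarge each `N i` to a maximal independent set: the covering condition on the edges of `H`
survives enlarging the sets, and a maximal independent set dominates every vertex outside it. -/

namespace SimpleGraph

variable {V : Type*} {G : SimpleGraph V}

theorem IsIndepSet.exists_maximal_superset {s : Set V} (hs : G.IsIndepSet s) :
    ∃ t, s ⊆ t ∧ Maximal G.IsIndepSet t :=
  zorn_subset_nonempty {t | G.IsIndepSet t}
    (fun c hc hchain _ =>
      ⟨⋃₀ c, (Set.pairwise_sUnion hchain.directedOn).2 hc, fun _ => Set.subset_sUnion_of_mem⟩)
    s hs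

theorem exists_adj_of_maximal_isIndepSet {t : Set V} (ht : Maximal G.IsIndepSet t) {x : V}
    (hx : x ∉ t) : ∃ y ∈ t, G.Adj x y := by
  by_contra! hno
  refine hx (ht.mem_of_prop_insert (Set.pairwise_insert.2 ⟨ht.prop, fun y hy _ => ?_⟩))
  exact ⟨hno y hy, fun hyx => hno y hy hyx.symm⟩

end SimpleGraph

theorem exists_wellLinked_witness_general {V : Type*} (G : SimpleGraph V) (k : ℕ)
    (h : ThresholdWidthAtMost G k) :
    ∃ (N : Fin k → Set V) (H : SimpleGraph V),
      (∀ i, _root_.IsIndepSet G (N i)) ∧ IsThresholdGraph H ∧ G ≤ H ∧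
        (∀ x y, H.Adj x y → ¬ G.Adj x y → ∃ i, x ∈ N i ∧ y ∈ N i) ∧
        ∀ (i : Fin k) (x : V), x ∉ N i → ∃ y ∈ N i, G.Adj x y := by
  obtain ⟨N, H, hindep, hthr, hle, hcover⟩ := h
  choose M hNM hM using fun i => IsIndepSet.exists_maximal_superset (G := G) (hindep i)
  refine ⟨M, H, fun i => (hM i).prop, hthr, hle, fun x y hxy hnxy => ?_,
    fun i _ hx => exists_adj_of_maximal_isIndepSet (hM i) hx⟩
  obtain ⟨i, hx, hy⟩ := hcover x y hxy hnxy
  exact ⟨i, hNM i hx, hNM i hy⟩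

/-- Every graph of threshold-width at most `k` has a well-linked witness with `k`
independent sets. -/
theorem exists_wellLinked_witness {V : Type*} [Fintype V] (G : SimpleGraph V) (k : ℕ)
    (h : ThresholdWidthAtMost G k) :
    ∃ (N : Fin k → Set V) (H : SimpleGraph V),
      (∀ i, _root_.IsIndepSet G (N i)) ∧ IsThresholdGraph H ∧ G ≤ H ∧
        (∀ x y, H.Adj x y → ¬ G.Adj x y → ∃ i, x ∈ N i ∧ y ∈ N i) ∧
        ∀ (i : Fin k) (x : V), x ∉ N i → ∃ y ∈ N i, G.Adj x y :=
  exists_wellLinked_witness_general G k h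
end

section
/- Let G be a finite simple graph with independent sets N_1,…,N_k such that every pair of distinct nonadjacent vertices of G lies together in some N_i (a k-probe clique), and assume the collection is well-linked. Then for all distinct vertices x and y: N(x) ⊆ N(y) if and only if {i : y ∈ N_i} is a nonempty subset of {i : x ∈ N_i}. -/
open SimpleGraph

/-! If `y ∈ N j ∌ x`, well-linkedness gives a neighbour `z ∈ N j` of `x`; when `N(x) ⊆ N(y)`
it is adjacent to `y` inside the independent set `N j`. Conversely, a neighbour `z` of `x` that is
not adjacent to `y` shares a label `j` with `y`, hence with `x`, again contradicting independence
of `N j`. -/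

theorem IsIndepSet.not_adj {V : Type*} {G : SimpleGraph V} {s : Set V}
    (hs : _root_.IsIndepSet G s) {u v : V} (hu : u ∈ s) (hv : v ∈ s) : ¬ G.Adj u v :=
  fun h => hs hu hv h.ne h

section Labels

variable {V ι : Type*} {G : SimpleGraph V} {N : ι → Set V} {x y : V}

theorem not_adj_of_neighborSet_subset (h : G.neighborSet x ⊆ G.neighborSet y) :
    ¬ G.Adj x y :=
  fun hxy => G.irrefl (h hxy)

theorem label_subset_of_neighborSet_subset (hindep : ∀ i, _root_.IsIndepSet G (N i))
    (hwl : ∀ i x, x ∉ N i → ∃ y ∈ N i, G.Adj x y)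
    (h : G.neighborSet x ⊆ G.neighborSet y) : {i | y ∈ N i} ⊆ {i | x ∈ N i} := by
  intro j hyj
  by_contra hxj
  obtain ⟨z, hzj, hxz⟩ := hwl j x hxj
  exact (hindep j).not_adj hyj hzj (h hxz)

theorem neighborSet_subset_of_label_subset (hindep : ∀ i, _root_.IsIndepSet G (N i))
    (hclique : ∀ x y : V, x ≠ y → ¬ G.Adj x y → ∃ i, x ∈ N i ∧ y ∈ N i)
    (hy : {i | y ∈ N i}.Nonempty) (h : {i | y ∈ N i} ⊆ {i | x ∈ N i}) :
    G.neighborSet x ⊆ G.neighborSet y := by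
  obtain ⟨i, hyi⟩ := hy
  intro z hxz
  by_contra hyz
  have hzy : z ≠ y := by
    rintro rfl
    exact (hindep i).not_adj (h hyi) hyi hxz
  obtain ⟨j, hzj, hyj⟩ := hclique z y hzy fun hzy => hyz hzy.symm
  exact (hindep j).not_adj (h hyj) hzj hxz

end Labels

theorem probeClique_neighborSet_subset_iff_general {V : Type*} (G : SimpleGraph V)
    (k : ℕ) (N : Fin k → Set V) (hindep : ∀ i, _root_.IsIndepSet G (N i))
    (hclique : ∀ x y : V, x ≠ y → ¬ G.Adj x y → ∃ i, x ∈ N i ∧ y ∈ N i)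
    (hwl : ∀ (i : Fin k) (x : V), x ∉ N i → ∃ y ∈ N i, G.Adj x y)
    (x y : V) (hxy : x ≠ y) :
    G.neighborSet x ⊆ G.neighborSet y ↔
      {i | y ∈ N i}.Nonempty ∧ {i | y ∈ N i} ⊆ {i | x ∈ N i} := by
  constructor
  · intro h
    obtain ⟨i, -, hyi⟩ := hclique x y hxy (not_adj_of_neighborSet_subset h)
    exact ⟨⟨i, hyi⟩, label_subset_of_neighborSet_subset hindep hwl h⟩
  · rintro ⟨hy, h⟩
    exact neighborSet_subset_of_label_subset hindep hclique hy h

/-- In a `k`-probe clique with a well-linked witness, `N(x) ⊆ N(y)` iff the label of `y`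
is a nonempty subset of the label of `x`. -/
theorem probeClique_neighborSet_subset_iff {V : Type*} [Fintype V] (G : SimpleGraph V)
    (k : ℕ) (N : Fin k → Set V) (hindep : ∀ i, _root_.IsIndepSet G (N i))
    (hclique : ∀ x y : V, x ≠ y → ¬ G.Adj x y → ∃ i, x ∈ N i ∧ y ∈ N i)
    (hwl : ∀ (i : Fin k) (x : V), x ∉ N i → ∃ y ∈ N i, G.Adj x y)
    (x y : V) (hxy : x ≠ y) :
    G.neighborSet x ⊆ G.neighborSet y ↔
      {i | y ∈ N i}.Nonempty ∧ {i | y ∈ N i} ⊆ {i | x ∈ N i} :=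
  probeClique_neighborSet_subset_iff_general G k N hindep hclique hwl x y hxy
end

section
/- Let G be a finite simple graph, let N_1,…,N_k be a well-linked collection of independent sets of G, and let H be a threshold graph on the same vertex set with E(G) ⊆ E(H) such that every edge of H not in G has both endpoints in some common N_i. Then for every pair of vertices x and y that are nonadjacent in G and satisfy N_H(x) ⊆ N_H[y]: N_G(x) ⊆ N_G(y) if and only if {i : y ∈ N_i} ⊆ {i : x ∈ N_i}. -/
open SimpleGraph

section

variable {V : Type*} {G : SimpleGraph V}

theorem IsIndepSet.mem_of_neighborSet_subset {s : Set V} (hs : _root_.IsIndepSet G s)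
    (hdom : ∀ x, x ∉ s → ∃ y ∈ s, G.Adj x y) {x y : V}
    (hnb : G.neighborSet x ⊆ G.neighborSet y) (hy : y ∈ s) : x ∈ s := by
  by_contra hx
  obtain ⟨z, hz, hxz⟩ := hdom x hx
  have hyz : G.Adj y z := hnb hxz
  exact hs hy hz hyz.ne hyz

theorem adj_of_adj_of_label_subset {H : SimpleGraph V} {k : ℕ} {N : Fin k → Set V}
    (hindep : ∀ i, _root_.IsIndepSet G (N i))
    (hcov : ∀ x y, H.Adj x y → ¬ G.Adj x y → ∃ i, x ∈ N i ∧ y ∈ N i) {x y z : V}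
    (hlab : {i | y ∈ N i} ⊆ {i | x ∈ N i}) (hxz : G.Adj x z) (hyz : H.Adj y z) :
    G.Adj y z := by
  by_contra hGyz
  obtain ⟨i, hyi, hzi⟩ := hcov y z hyz hGyz
  exact hindep i (hlab hyi) hzi hxz.ne hxz

end

theorem nonadj_neighborSet_subset_iff_label_general {V : Type*}
    (G H : SimpleGraph V) (k : ℕ) (N : Fin k → Set V)
    (hindep : ∀ i, _root_.IsIndepSet G (N i))
    (hwl : ∀ (i : Fin k) (x : V), x ∉ N i → ∃ y ∈ N i, G.Adj x y)
    (hle : G ≤ H)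
    (hcov : ∀ x y, H.Adj x y → ¬ G.Adj x y → ∃ i, x ∈ N i ∧ y ∈ N i)
    (x y : V) (hxy : ¬ G.Adj x y)
    (hsub : H.neighborSet x ⊆ insert y (H.neighborSet y)) :
    G.neighborSet x ⊆ G.neighborSet y ↔ {i | y ∈ N i} ⊆ {i | x ∈ N i} := by
  refine ⟨fun hnb i hy => (hindep i).mem_of_neighborSet_subset (hwl i) hnb hy, ?_⟩
  intro hlab z hxz
  obtain rfl | hyz := hsub (hle hxz)
  · exact absurd hxz hxy
  · exact adj_of_adj_of_label_subset hindep hcov hlab hxz hyz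

/-- Let `H` be a threshold embedding of `(G, N)` with a well-linked witness. For every
pair `x, y` nonadjacent in `G` with `N_H(x) ⊆ N_H[y]`, one has `N_G(x) ⊆ N_G(y)` iff
the label of `y` is contained in the label of `x`. -/
theorem nonadj_neighborSet_subset_iff_label {V : Type*} [Fintype V]
    (G H : SimpleGraph V) (k : ℕ) (N : Fin k → Set V)
    (hindep : ∀ i, _root_.IsIndepSet G (N i))
    (hwl : ∀ (i : Fin k) (x : V), x ∉ N i → ∃ y ∈ N i, G.Adj x y)
    (hH : IsThresholdGraph H) (hle : G ≤ H)
    (hcov : ∀ x y, H.Adj x y → ¬ G.Adj x y → ∃ i, x ∈ N i ∧ y ∈ N i)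
    (x y : V) (hxy : ¬ G.Adj x y)
    (hsub : H.neighborSet x ⊆ insert y (H.neighborSet y)) :
    G.neighborSet x ⊆ G.neighborSet y ↔ {i | y ∈ N i} ⊆ {i | x ∈ N i} :=
  nonadj_neighborSet_subset_iff_label_general G H k N hindep hwl hle hcov x y hxy hsub
end

section
/- Let G be a finite simple graph of threshold-width at most k that contains no k-probe module. Then G has at most 2^{k+1} + k maximal vertices, where a vertex x is maximal if there is no vertex y with N(x) ⊆ N(y) and N(y) ≠ N(x), and there is no vertex y with N[x] ⊆ N[y] and N[y] ≠ N[x]. -/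
open SimpleGraph

/-- A `k`-probe module: a false module with at least `3` vertices or a true module with
at least `k + 3` vertices. -/
def IsKProbeModule {V : Type*} (G : SimpleGraph V) (k : ℕ) (S : Set V) : Prop :=
  (S.Pairwise (fun u v => G.neighborSet u = G.neighborSet v) ∧ 3 ≤ S.ncard) ∨
  (S.Pairwise (fun u v => insert u (G.neighborSet u) = insert v (G.neighborSet v)) ∧
    k + 3 ≤ S.ncard)

/-- A vertex is maximal if its open (resp. closed) neighborhood is not strictly contained
in the open (resp. closed) neighborhood of any other vertex. -/
def IsMaximalVertex {V : Type*} (G : SimpleGraph V) (x : V) : Prop :=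
  (¬ ∃ y : V, G.neighborSet x ⊆ G.neighborSet y ∧ G.neighborSet y ≠ G.neighborSet x) ∧
  (¬ ∃ y : V, insert x (G.neighborSet x) ⊆ insert y (G.neighborSet y) ∧
      insert y (G.neighborSet y) ≠ insert x (G.neighborSet x))

/-! In a threshold graph the neighbourhoods are totally preordered by inclusion: two vertices
with incomparable neighbourhoods would span an induced `2K₂`, `P₄` or `C₄`. Vertices lying in
exactly the same independent sets `N i` inherit this comparison from the threshold completion
`H` to `G`, so two maximal vertices with the same sets are false or true twins. Grouping the
maximal vertices by their index set gives `2 ^ k` groups of pairwise twins; without `k`-probe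
modules each group has at most `k + 2` members, and at most `2` when its index set is nonempty,
since the group is then independent. -/

namespace SimpleGraph

variable {V : Type*}

theorem false_of_isEmpty_embedding {W : Type*} {P : SimpleGraph W} {H : SimpleGraph V}
    (hP : IsEmpty (P ↪g H)) (v : W → V) (hv : v.Injective)
    (hadj : ∀ i j, H.Adj (v i) (v j) ↔ P.Adj i j) : False :=
  hP.elim ⟨⟨v, hv⟩, hadj _ _⟩

def Dominates (G : SimpleGraph V) (y x : V) : Prop :=
  ∀ z, z ≠ y → G.Adj x z → G.Adj y z

/-- The vertices `x, a, b, y` span `2K₂`, `P₄` or `C₄`, depending on the edges `xy` and `ab`. -/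
theorem _root_.IsThresholdGraph.false_of_alternating {H : SimpleGraph V} (hT : IsThresholdGraph H)
    {x y a b : V} (hxa : H.Adj x a) (hyb : H.Adj y b) (hxb : ¬ H.Adj x b) (hya : ¬ H.Adj y a)
    (hay : a ≠ y) (hbx : b ≠ x) : False := by
  have hxy : x ≠ y := by rintro rfl; exact hya hxa
  have hab : a ≠ b := by rintro rfl; exact hxb hxa
  rcases em (H.Adj x y) with hxy' | hxy' <;> rcases em (H.Adj a b) with hab' | hab' <;>
    [refine false_of_isEmpty_embedding hT.2.1 ![x, a, b, y] ?_ ?_;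
      refine false_of_isEmpty_embedding hT.1 ![a, x, y, b] ?_ ?_;
      refine false_of_isEmpty_embedding hT.1 ![x, a, b, y] ?_ ?_;
      refine false_of_isEmpty_embedding hT.2.2 ![x, a, b, y] ?_ ?_]
  all_goals
    intro i j
    fin_cases i <;> fin_cases j <;>
      simp [hxa, hyb, hxb, hya, hxa.symm, hyb.symm, hxy', hab', H.adj_comm b x, H.adj_comm a y,
        H.adj_comm b a, H.adj_comm y x, hxa.ne, hyb.ne, hxy, hab, hay, hbx, hxa.ne.symm,
        hyb.ne.symm, hxy.symm, hab.symm, hay.symm, hbx.symm, cycleGraph_adj, pathGraph_adj,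
        twoK2] <;> decide

theorem _root_.IsThresholdGraph.dominates_total {H : SimpleGraph V} (hT : IsThresholdGraph H)
    (x y : V) : H.Dominates y x ∨ H.Dominates x y := by
  by_contra! h
  simp only [Dominates, not_forall, exists_prop] at h
  obtain ⟨⟨a, hay, hxa, hya⟩, ⟨b, hbx, hyb, hxb⟩⟩ := h
  exact hT.false_of_alternating hxa hyb hxb hya hay hbx

theorem dominates_of_forall_mem_iff {G H : SimpleGraph V} {ι : Type*} {N : ι → Set V}
    (hN : ∀ i, _root_.IsIndepSet G (N i)) (hGH : G ≤ H)
    (hfill : ∀ x y, H.Adj x y → ¬ G.Adj x y → ∃ i, x ∈ N i ∧ y ∈ N i) {x y : V}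
    (hmem : ∀ i, x ∈ N i ↔ y ∈ N i) (hdom : H.Dominates y x) : G.Dominates y x := by
  intro z hzy hxz
  by_contra hyz
  obtain ⟨i, hyi, hzi⟩ := hfill y z (hdom z hzy (hGH hxz)) hyz
  exact hN i ((hmem i).2 hyi) hzi hxz.ne hxz

def closedNeighborSet (G : SimpleGraph V) (v : V) : Set V :=
  insert v (G.neighborSet v)

def AreTwins (G : SimpleGraph V) (x y : V) : Prop :=
  G.neighborSet x = G.neighborSet y ∨ G.closedNeighborSet x = G.closedNeighborSet y

variable {G : SimpleGraph V} {x y : V}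

theorem AreTwins.symm (h : G.AreTwins x y) : G.AreTwins y x :=
  h.imp Eq.symm Eq.symm

theorem not_adj_of_neighborSet_eq (h : G.neighborSet x = G.neighborSet y) : ¬ G.Adj x y :=
  fun hxy => G.irrefl (show y ∈ G.neighborSet y from h ▸ hxy)

theorem adj_of_closedNeighborSet_eq (hne : x ≠ y)
    (h : G.closedNeighborSet x = G.closedNeighborSet y) : G.Adj x y := by
  have hx : x ∈ G.closedNeighborSet y := h ▸ Set.mem_insert x _
  exact (Set.mem_insert_iff.1 hx).resolve_left hne |>.symm

theorem _root_.IsMaximalVertex.areTwins_of_dominates (hx : IsMaximalVertex G x)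
    (hdom : G.Dominates y x) : G.AreTwins x y := by
  by_cases hxy : G.Adj x y
  · refine .inr (not_not.1 fun hne => hx.2 ⟨y, ?_, Ne.symm hne⟩)
    rintro z (rfl | hxz)
    · exact Set.mem_insert_of_mem _ hxy.symm
    · rcases eq_or_ne z y with rfl | hzy
      · exact Set.mem_insert _ _
      · exact Set.mem_insert_of_mem _ (hdom z hzy hxz)
  · refine .inl (not_not.1 fun hne => hx.1 ⟨y, ?_, Ne.symm hne⟩)
    intro z hxz
    exact hdom z (by rintro rfl; exact hxy hxz) hxz

theorem pairwise_neighborSet_eq_or_pairwise_closedNeighborSet_eq {S : Set V}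
    (hS : S.Pairwise G.AreTwins) :
    S.Pairwise (fun x y => G.neighborSet x = G.neighborSet y) ∨
      S.Pairwise (fun x y => G.closedNeighborSet x = G.closedNeighborSet y) := by
  by_cases h : ∃ u ∈ S, ∃ v ∈ S, u ≠ v ∧ G.closedNeighborSet u = G.closedNeighborSet v
  · obtain ⟨u, hu, v, hv, huv, hcl⟩ := h
    have hclass : ∀ w ∈ S, G.closedNeighborSet w = G.closedNeighborSet u := by
      intro w hw
      rcases eq_or_ne w u with rfl | hwu
      · rfl
      rcases hS hw hu hwu with hop | hcl'
      · rcases eq_or_ne w v with rfl | hwv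
        · exact hcl.symm
        rcases hS hw hv hwv with hop' | hcl''
        · exact absurd (adj_of_closedNeighborSet_eq huv hcl)
            (not_adj_of_neighborSet_eq (hop.symm.trans hop'))
        · exact hcl''.trans hcl.symm
      · exact hcl'
    exact .inr fun x hx y hy _ => (hclass x hx).trans (hclass y hy).symm
  · push Not at h
    exact .inl fun x hx y hy hxy => (hS hx hy hxy).resolve_right (h x hx y hy hxy)

theorem ncard_le_two_of_pairwise_neighborSet_eq {k : ℕ} (hmod : ¬ ∃ S, IsKProbeModule G k S)
    {S : Set V} (hS : S.Pairwise (fun x y => G.neighborSet x = G.neighborSet y)) :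
    S.ncard ≤ 2 := by
  by_contra! hS3
  exact hmod ⟨S, .inl ⟨hS, hS3⟩⟩

theorem ncard_le_of_pairwise_areTwins {k : ℕ} (hmod : ¬ ∃ S, IsKProbeModule G k S) {S : Set V}
    (hS : S.Pairwise G.AreTwins) : S.ncard ≤ k + 2 := by
  rcases pairwise_neighborSet_eq_or_pairwise_closedNeighborSet_eq hS with hop | hcl
  · have := ncard_le_two_of_pairwise_neighborSet_eq hmod hop
    omega
  · by_contra! hSk
    exact hmod ⟨S, .inr ⟨hcl, hSk⟩⟩

theorem ncard_le_two_of_pairwise_areTwins {k : ℕ} (hmod : ¬ ∃ S, IsKProbeModule G k S)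
    {S : Set V} (hS : S.Pairwise G.AreTwins) (hind : G.IsIndepSet S) : S.ncard ≤ 2 :=
  ncard_le_two_of_pairwise_neighborSet_eq hmod fun _ hx _ hy hxy =>
    (hS hx hy hxy).resolve_right fun h => hind hx hy hxy (adj_of_closedNeighborSet_eq hxy h)

theorem areTwins_of_forall_mem_iff {H : SimpleGraph V} {ι : Type*} {N : ι → Set V}
    (hN : ∀ i, _root_.IsIndepSet G (N i)) (hT : IsThresholdGraph H) (hGH : G ≤ H)
    (hfill : ∀ x y, H.Adj x y → ¬ G.Adj x y → ∃ i, x ∈ N i ∧ y ∈ N i)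
    (hx : IsMaximalVertex G x) (hy : IsMaximalVertex G y) (hmem : ∀ i, x ∈ N i ↔ y ∈ N i) :
    G.AreTwins x y := by
  rcases hT.dominates_total x y with hyx | hxy
  · exact hx.areTwins_of_dominates (dominates_of_forall_mem_iff hN hGH hfill hmem hyx)
  · exact (hy.areTwins_of_dominates
      (dominates_of_forall_mem_iff hN hGH hfill (fun i => (hmem i).symm) hxy)).symm

end SimpleGraph

open Finset

/-- A graph of threshold-width at most `k` without `k`-probe modules has at most
`2 ^ (k + 1) + k` maximal vertices. -/
theorem card_maximalVertices_le {V : Type*} [Fintype V] (G : SimpleGraph V) (k : ℕ)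
    (h : ThresholdWidthAtMost G k) (hmod : ¬ ∃ S : Set V, IsKProbeModule G k S) :
    {x : V | IsMaximalVertex G x}.ncard ≤ 2 ^ (k + 1) + k := by
  classical
  obtain ⟨N, H, hN, hT, hGH, hfill⟩ := h
  let M : Finset V := univ.filter (IsMaximalVertex G)
  let label (x : V) : Finset (Fin k) := univ.filter (x ∈ N ·)
  let fiber (A : Finset (Fin k)) : Finset V := M.filter (label · = A)
  have htwins (A : Finset (Fin k)) : (fiber A : Set V).Pairwise G.AreTwins := by
    intro x hx y hy _
    simp only [fiber, M, coe_filter, mem_filter, mem_univ, true_and, Set.mem_ofPred_eq] at hx hy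
    refine areTwins_of_forall_mem_iff hN hT hGH hfill hx.1 hy.1 fun i => ?_
    simpa [label] using Finset.ext_iff.1 (hx.2.trans hy.2.symm) i
  have hfiber (A : Finset (Fin k)) : #(fiber A) ≤ 2 + if A = ∅ then k else 0 := by
    rw [← Set.ncard_coe_finset]
    rcases eq_or_ne A ∅ with rfl | hA
    · have := ncard_le_of_pairwise_areTwins hmod (htwins ∅)
      rw [if_pos rfl]
      omega
    · obtain ⟨i, hi⟩ := nonempty_iff_ne_empty.2 hA
      have hsub : (fiber A : Set V) ⊆ N i := by
        intro x hx
        simp only [fiber, coe_filter, Set.mem_ofPred_eq] at hx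
        have hix : i ∈ label x := hx.2 ▸ hi
        simpa [label] using hix
      simpa [hA] using ncard_le_two_of_pairwise_areTwins hmod (htwins A) ((hN i).mono hsub)
  calc {x : V | IsMaximalVertex G x}.ncard = #M := by
        rw [Set.ncard_eq_toFinset_card', Set.toFinset_ofPred]
    _ = ∑ A, #(fiber A) := card_eq_sum_card_fiberwise fun _ _ => mem_univ _
    _ ≤ ∑ A : Finset (Fin k), (2 + if A = ∅ then k else 0) := sum_le_sum fun A _ => hfiber A
    _ = 2 ^ (k + 1) + k := by simp [sum_add_distrib, pow_succ, mul_comm]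
end

section
/- A finite simple graph H is a threshold graph if and only if for every pair of vertices x and y, either N(x) ⊆ N[y] or N(y) ⊆ N[x]. -/
open SimpleGraph

/-!
Everything goes through the vicinal preorder `x ≼ y :⇔ N(x) ⊆ N[y]`. It is inherited by induced
subgraphs, and `P₄`, `C₄` and `2K₂` each contain two incomparable vertices, so a graph whose
vicinal preorder is total is threshold. Conversely, if `x` and `y` are incomparable, pick
`a ∈ N(x) \ N[y]` and `b ∈ N(y) \ N[x]`: the vertices `a, x, y, b` are distinct, and according
as `x ~ y` and `a ~ b` they induce `C₄` (`a x y b`), `P₄` (`a x y b` or `x a b y`) or `2K₂`.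
-/

namespace SimpleGraph

variable {V W : Type*} {G : SimpleGraph W} {H : SimpleGraph V}

def VicinalLE (H : SimpleGraph V) (x y : V) : Prop :=
  H.neighborSet x ⊆ insert y (H.neighborSet y)

def IsVicinallyTotal (H : SimpleGraph V) : Prop :=
  ∀ x y, H.VicinalLE x y ∨ H.VicinalLE y x

theorem not_vicinalLE_iff {x y : V} :
    ¬ H.VicinalLE x y ↔ ∃ a, H.Adj x a ∧ a ≠ y ∧ ¬ H.Adj y a := by
  simp [VicinalLE, Set.not_subset]

theorem Embedding.vicinalLE_of_map (f : G ↪g H) {x y : W}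
    (h : H.VicinalLE (f x) (f y)) : G.VicinalLE x y := by
  intro a ha
  simpa using h (f.map_adj_iff.mpr ha)

theorem IsVicinallyTotal.of_embedding (f : G ↪g H) (hH : H.IsVicinallyTotal) :
    G.IsVicinallyTotal := fun x y =>
  (hH (f x) (f y)).imp f.vicinalLE_of_map f.vicinalLE_of_map

theorem not_isVicinallyTotal_of_adj {x y a b : V} (hxa : H.Adj x a) (hay : a ≠ y)
    (hya : ¬ H.Adj y a) (hyb : H.Adj y b) (hbx : b ≠ x) (hxb : ¬ H.Adj x b) :
    ¬ H.IsVicinallyTotal := fun hH =>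
  (hH x y).elim (not_vicinalLE_iff.mpr ⟨a, hxa, hay, hya⟩)
    (not_vicinalLE_iff.mpr ⟨b, hyb, hbx, hxb⟩)

theorem not_isVicinallyTotal_pathGraph : ¬ (pathGraph 4).IsVicinallyTotal := by
  apply not_isVicinallyTotal_of_adj (x := 1) (y := 2) (a := 0) (b := 3) <;>
    simp +decide [pathGraph_adj]

theorem not_isVicinallyTotal_cycleGraph : ¬ (cycleGraph 4).IsVicinallyTotal := by
  apply not_isVicinallyTotal_of_adj (x := 0) (y := 1) (a := 3) (b := 2) <;> simp +decide

theorem not_isVicinallyTotal_twoK2 : ¬ twoK2.IsVicinallyTotal := by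
  apply not_isVicinallyTotal_of_adj (x := 0) (y := 2) (a := 1) (b := 3) <;> simp +decide [twoK2]

end SimpleGraph

section

variable {V : Type*} {H : SimpleGraph V}

theorem IsThresholdGraph.of_isVicinallyTotal (hH : H.IsVicinallyTotal) : IsThresholdGraph H :=
  ⟨⟨fun f => not_isVicinallyTotal_pathGraph (hH.of_embedding f)⟩,
    ⟨fun f => not_isVicinallyTotal_cycleGraph (hH.of_embedding f)⟩,
    ⟨fun f => not_isVicinallyTotal_twoK2 (hH.of_embedding f)⟩⟩

theorem not_isThresholdGraph_of_not_vicinalLE {x y : V} (hnxy : ¬ H.VicinalLE x y)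
    (hnyx : ¬ H.VicinalLE y x) : ¬ IsThresholdGraph H := by
  obtain ⟨a, hxa, hay, hya⟩ := not_vicinalLE_iff.mp hnxy
  obtain ⟨b, hyb, hbx, hxb⟩ := not_vicinalLE_iff.mp hnyx
  have hxa' : x ≠ a := hxa.ne
  have hyb' : y ≠ b := hyb.ne
  have hxy : x ≠ y := by rintro rfl; exact hya hxa
  have hab : a ≠ b := by rintro rfl; exact hxb hxa
  have hinj : Function.Injective ![a, x, y, b] := by
    rw [← List.nodup_ofFn]; simp [hxa'.symm, hay, hab, hxy, hbx.symm, hyb']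
  have hinj' : Function.Injective ![x, a, b, y] := by
    rw [← List.nodup_ofFn]; simp [hxa', hay, hab, hxy, hbx.symm, hyb'.symm]
  rintro ⟨hP, hC, hK⟩
  by_cases hxy_adj : H.Adj x y <;> by_cases hab_adj : H.Adj a b
  · exact hC.false ⟨⟨![a, x, y, b], hinj⟩, fun {i j} => by
      fin_cases i <;> fin_cases j <;> simp +decide [H.adj_comm, *]⟩
  · exact hP.false ⟨⟨![a, x, y, b], hinj⟩, fun {i j} => by
      fin_cases i <;> fin_cases j <;> simp +decide [pathGraph_adj, H.adj_comm, *]⟩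
  · exact hP.false ⟨⟨![x, a, b, y], hinj'⟩, fun {i j} => by
      fin_cases i <;> fin_cases j <;> simp +decide [pathGraph_adj, H.adj_comm, *]⟩
  · exact hK.false ⟨⟨![a, x, y, b], hinj⟩, fun {i j} => by
      fin_cases i <;> fin_cases j <;> simp +decide [twoK2, H.adj_comm, *]⟩

theorem IsThresholdGraph.isVicinallyTotal (hH : IsThresholdGraph H) : H.IsVicinallyTotal :=
  fun x y => by_contra fun h =>
    not_isThresholdGraph_of_not_vicinalLE (not_or.mp h).1 (not_or.mp h).2 hH

end

theorem isThresholdGraph_iff_chain_general {V : Type*} (H : SimpleGraph V) :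
    IsThresholdGraph H ↔
      ∀ x y : V,
        H.neighborSet x ⊆ insert y (H.neighborSet y) ∨
        H.neighborSet y ⊆ insert x (H.neighborSet x) :=
  ⟨IsThresholdGraph.isVicinallyTotal, IsThresholdGraph.of_isVicinallyTotal⟩

/-- A finite graph is threshold iff for every two vertices `x` and `y`, `N(x) ⊆ N[y]` or
`N(y) ⊆ N[x]`. -/
theorem isThresholdGraph_iff_chain {V : Type*} [Fintype V] (H : SimpleGraph V) :
    IsThresholdGraph H ↔
      ∀ x y : V,
        H.neighborSet x ⊆ insert y (H.neighborSet y) ∨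
        H.neighborSet y ⊆ insert x (H.neighborSet x) :=
  isThresholdGraph_iff_chain_general H
end

section
/- A finite simple graph is a threshold graph if and only if every nonempty induced subgraph has an isolated vertex or a universal vertex. -/
open SimpleGraph

/-!
In a graph without induced `P₄`, `C₄` or `2K₂`, no two vertices `u`, `v` have private neighbours
`a ~ u`, `b ~ v` with `a ≁ v`, `b ≁ u`: the four vertices would induce one of the forbidden
graphs. So neighbourhoods are nested up to the two vertices themselves, and a vertex `x` of
maximum degree is universal unless there are isolated vertices: for `y ≁ x` nestedness gives
`N(y) ⊆ N(x)`, and a neighbour `z` of `y` would then satisfy `N[x] ⊊ N[z]`.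
Conversely, `P₄`, `C₄` and `2K₂` have neither isolated nor universal vertices.
-/

namespace SimpleGraph

variable {U V : Type*} {G : SimpleGraph V}

def Embedding.ofAdjIff {H : SimpleGraph U} (f : U → V) (hf : Function.Injective f)
    (hadj : ∀ i j, G.Adj (f i) (f j) ↔ H.Adj i j) : H ↪g G :=
  ⟨⟨f, hf⟩, hadj _ _⟩

def Embedding.pathGraph4 {a b c d : V} (hab : G.Adj a b) (hbc : G.Adj b c) (hcd : G.Adj c d)
    (hac : ¬G.Adj a c) (had : ¬G.Adj a d) (hbd : ¬G.Adj b d) : pathGraph 4 ↪g G := by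
  refine Embedding.ofAdjIff ![a, b, c, d] ?_ ?_
  · intro i j hij
    fin_cases i <;> fin_cases j <;> simp_all [G.adj_comm]
  · intro i j
    fin_cases i <;> fin_cases j <;> simp [pathGraph_adj, G.adj_comm, *]

def Embedding.cycleGraph4 {a b c d : V} (hab : G.Adj a b) (hbc : G.Adj b c) (hcd : G.Adj c d)
    (hda : G.Adj d a) (hac : ¬G.Adj a c) (hbd : ¬G.Adj b d) (hnac : a ≠ c) (hnbd : b ≠ d) :
    cycleGraph 4 ↪g G := by
  refine Embedding.ofAdjIff ![a, b, c, d] ?_ ?_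
  · intro i j hij
    fin_cases i <;> fin_cases j <;> simp_all [G.adj_comm]
  · intro i j
    fin_cases i <;> fin_cases j <;> simp +decide [G.adj_comm, hda.symm, *]

def Embedding.twoK2 {a b c d : V} (hab : G.Adj a b) (hcd : G.Adj c d) (hac : ¬G.Adj a c)
    (had : ¬G.Adj a d) (hbc : ¬G.Adj b c) (hbd : ¬G.Adj b d) : twoK2 ↪g G := by
  refine Embedding.ofAdjIff ![a, b, c, d] ?_ ?_
  · intro i j hij
    fin_cases i <;> fin_cases j <;> simp_all [G.adj_comm]
  · intro i j
    fin_cases i <;> fin_cases j <;> simp +decide [_root_.twoK2, G.adj_comm, *]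

end SimpleGraph

open SimpleGraph

namespace IsThresholdGraph

variable {V : Type*} {G : SimpleGraph V}

theorem induce (hG : IsThresholdGraph G) (s : Set V) : IsThresholdGraph (G.induce s) :=
  ⟨@Function.isEmpty _ _ hG.1 (Embedding.induce s).comp,
    @Function.isEmpty _ _ hG.2.1 (Embedding.induce s).comp,
    @Function.isEmpty _ _ hG.2.2 (Embedding.induce s).comp⟩

theorem adj_of_adj_of_not_adj (hG : IsThresholdGraph G) {u v a b : V} (hua : G.Adj u a)
    (hva : ¬G.Adj v a) (hav : a ≠ v) (hvb : G.Adj v b) (hbu : b ≠ u) : G.Adj u b := by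
  by_contra hub
  have hva' : ¬G.Adj a v := fun h => hva h.symm
  by_cases huv : G.Adj u v <;> by_cases hab : G.Adj a b
  · exact hG.2.1.false (Embedding.cycleGraph4 hua hab hvb.symm huv.symm hub hva' hbu.symm hav)
  · exact hG.1.false (Embedding.pathGraph4 hua.symm huv hvb hva' hab hub)
  · exact hG.1.false (Embedding.pathGraph4 hua hab hvb.symm hub huv hva')
  · exact hG.2.2.false (Embedding.twoK2 hua hvb huv hub hva' hab)

variable [G.LocallyFinite]

theorem neighborFinset_subset_of_degree_le (hG : IsThresholdGraph G) {x y : V}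
    (hxy : ¬G.Adj x y) (hdeg : G.degree y ≤ G.degree x) :
    G.neighborFinset y ⊆ G.neighborFinset x := by
  intro a hya
  by_contra hxa
  rw [mem_neighborFinset] at hya hxa
  have hax : a ≠ x := by rintro rfl; exact hxy hya.symm
  have hsub : G.neighborFinset x ⊆ G.neighborFinset y := fun b hxb => by
    rw [mem_neighborFinset] at hxb ⊢
    exact hG.adj_of_adj_of_not_adj hya hxa hax hxb (by rintro rfl; exact hxy hxb)
  have hlt : G.degree x < G.degree y := Finset.card_lt_card <|
    (Finset.ssubset_iff_of_subset hsub).mpr ⟨a, by simpa using hya, by simpa using hxa⟩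
  omega

theorem degree_lt_of_adj_of_not_adj (hG : IsThresholdGraph G) {x y z : V} (hxz : G.Adj x z)
    (hzy : G.Adj z y) (hxy : ¬G.Adj x y) (hyx : y ≠ x) : G.degree x < G.degree z := by
  classical
  have hsub : insert x (G.neighborFinset x) ⊂ insert z (G.neighborFinset z) := by
    refine Finset.ssubset_iff_of_subset ?_ |>.mpr ⟨y, ?_, ?_⟩
    · intro b hb
      rw [Finset.mem_insert, mem_neighborFinset] at hb ⊢
      rcases hb with rfl | hxb
      · exact Or.inr hxz.symm
      · by_cases hbz : b = z
        · exact Or.inl hbz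
        · exact Or.inr (hG.adj_of_adj_of_not_adj hzy hxy hyx hxb hbz)
    · simp [hzy]
    · simp [hyx, hxy]
  simpa [Finset.card_insert_of_notMem (G.notMem_neighborFinset_self _)] using
    Finset.card_lt_card hsub

theorem exists_isolated_or_universal [Fintype V] [Nonempty V] (hG : IsThresholdGraph G) :
    (∃ x, ∀ y, ¬G.Adj x y) ∨ ∃ x, ∀ y, y ≠ x → G.Adj x y := by
  classical
  refine or_iff_not_imp_left.mpr fun hiso => ?_
  push Not at hiso
  obtain ⟨x, -, hmax⟩ := Finset.univ.exists_max_image (G.degree ·) Finset.univ_nonempty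
  refine ⟨x, fun y hyx => by_contra fun hxy => ?_⟩
  obtain ⟨z, hyz⟩ := hiso y
  have hxz : G.Adj x z := by
    simpa using hG.neighborFinset_subset_of_degree_le hxy (hmax y (Finset.mem_univ y))
      (by simpa using hyz)
  exact (hmax z (Finset.mem_univ z)).not_gt (hG.degree_lt_of_adj_of_not_adj hxz hyz.symm hxy hyx)

end IsThresholdGraph

theorem isEmpty_embedding_of_forall_isolated_or_universal {U V : Type*} [Nonempty U]
    {H : SimpleGraph U} {G : SimpleGraph V} (hH : ∀ i, (∃ j, H.Adj i j) ∧ ∃ j, j ≠ i ∧ ¬H.Adj i j)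
    (hG : ∀ W : Set V, W.Nonempty →
      (∃ x ∈ W, ∀ y ∈ W, ¬G.Adj x y) ∨ (∃ x ∈ W, ∀ y ∈ W, y ≠ x → G.Adj x y)) :
    IsEmpty (H ↪g G) := by
  refine ⟨fun φ => ?_⟩
  obtain ⟨-, ⟨i, rfl⟩, hi⟩ | ⟨-, ⟨i, rfl⟩, hi⟩ := hG (Set.range φ) (Set.range_nonempty φ)
  · obtain ⟨j, hij⟩ := (hH i).1
    exact hi (φ j) ⟨j, rfl⟩ (φ.map_adj_iff.mpr hij)
  · obtain ⟨j, hji, hij⟩ := (hH i).2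
    exact hij (φ.map_adj_iff.mp (hi (φ j) ⟨j, rfl⟩ (φ.injective.ne hji)))

/-- A finite graph is threshold iff every nonempty induced subgraph has an isolated
vertex or a universal vertex. -/
theorem isThresholdGraph_iff_isolated_or_universal {V : Type*} [Fintype V]
    (G : SimpleGraph V) :
    IsThresholdGraph G ↔
      ∀ W : Set V, W.Nonempty →
        (∃ x ∈ W, ∀ y ∈ W, ¬ G.Adj x y) ∨
        (∃ x ∈ W, ∀ y ∈ W, y ≠ x → G.Adj x y) := by
  classical
  constructor
  · intro hG W hW
    have : Nonempty W := hW.to_subtype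
    obtain ⟨⟨x, hx⟩, hiso⟩ | ⟨⟨x, hx⟩, huniv⟩ := (hG.induce W).exists_isolated_or_universal
    · exact Or.inl ⟨x, hx, fun y hy => hiso ⟨y, hy⟩⟩
    · exact Or.inr ⟨x, hx, fun y hy hyx => huniv ⟨y, hy⟩ (ne_of_apply_ne Subtype.val hyx)⟩
  · intro h
    refine ⟨?_, ?_, ?_⟩ <;> refine isEmpty_embedding_of_forall_isolated_or_universal ?_ h
    · simp only [pathGraph_adj]; decide
    · decide
    · unfold twoK2; decide
end

section
/- Let (G, (N_1,…,N_k)) be a partitioned k-probe threshold graph where G has at least one vertex. Then G has an isolated vertex, or there exists a vertex ω such that every vertex z that is distinct from ω and not adjacent to ω satisfies ω ∈ N_i and z ∈ N_i for some i (a probe universal vertex). -/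
/-!
Neighbourhoods in a threshold graph are nested: an alternating 4-cycle (edges `ub`, `va`,
non-edges `ua`, `vb`) cannot occur, since depending on the edges `uv` and `ab` its
vertices induce `C₄`, `P₄` or `2K₂`. Hence a vertex `ω` of maximum degree in the threshold
supergraph `H` is adjacent to every neighbour of every other vertex. If `G` has no isolated
vertex, every `z ≠ ω` has an `H`-neighbour, so `ω` is `H`-adjacent to `z`, and a non-edge
`ωz` of `G` is an added edge, whose endpoints lie in a common `N i`.
-/

open SimpleGraph

/-- `(G, N)` is a partitioned `k`-probe threshold graph: the `N i` are independent sets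
and there is a threshold embedding of `G` whose extra edges lie in common sets `N i`. -/
def PartitionedKProbeThreshold {V : Type*} (G : SimpleGraph V) {k : ℕ}
    (N : Fin k → Set V) : Prop :=
  (∀ i, _root_.IsIndepSet G (N i)) ∧
    ∃ H : SimpleGraph V, IsThresholdGraph H ∧ G ≤ H ∧
      ∀ x y, H.Adj x y → ¬ G.Adj x y → ∃ i, x ∈ N i ∧ y ∈ N i

theorem SimpleGraph.nonempty_embedding_of_forall_lt {W V : Type*} [LinearOrder W]
    {G : SimpleGraph W} {H : SimpleGraph V} (x : W → V)
    (hx : ∀ i j, i < j → x i ≠ x j ∧ (H.Adj (x i) (x j) ↔ G.Adj i j)) :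
    Nonempty (G ↪g H) := by
  refine ⟨⟨⟨x, fun i j hij => ?_⟩, fun {i j} => ?_⟩⟩
  · rcases lt_trichotomy i j with h | rfl | h
    · exact absurd hij (hx i j h).1
    · rfl
    · exact absurd hij.symm (hx j i h).1
  · rcases lt_trichotomy i j with h | rfl | h
    · exact (hx i j h).2
    · simp
    · exact H.adj_comm _ _ |>.trans <| (hx j i h).2.trans <| G.adj_comm _ _

namespace IsThresholdGraph

variable {V : Type*} {H : SimpleGraph V}

theorem not_alternating (hH : IsThresholdGraph H) {u v a b : V} (hua : u ≠ a) (hvb : v ≠ b)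
    (hub : H.Adj u b) (hva : H.Adj v a) (hua' : ¬H.Adj u a) (hvb' : ¬H.Adj v b) : False := by
  have hbu := hub.ne.symm
  have hav := hva.ne.symm
  have huv : u ≠ v := by rintro rfl; exact hvb' hub
  have hab : a ≠ b := by rintro rfl; exact hvb' hva
  by_cases huv' : H.Adj u v <;> by_cases hab' : H.Adj a b
  · refine hH.2.1.false (nonempty_embedding_of_forall_lt ![b, u, v, a] ?_).some
    intro i j hij
    fin_cases i <;> fin_cases j <;>
      simp_all +decide [adj_comm, eq_comm]
  · refine hH.1.false (nonempty_embedding_of_forall_lt ![b, u, v, a] ?_).some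
    intro i j hij
    fin_cases i <;> fin_cases j <;>
      simp_all +decide [pathGraph_adj, adj_comm, eq_comm]
  · refine hH.1.false (nonempty_embedding_of_forall_lt ![u, b, a, v] ?_).some
    intro i j hij
    fin_cases i <;> fin_cases j <;>
      simp_all +decide [pathGraph_adj, adj_comm, eq_comm]
  · refine hH.2.2.false (nonempty_embedding_of_forall_lt ![b, u, v, a] ?_).some
    intro i j hij
    fin_cases i <;> fin_cases j <;>
      simp_all +decide [twoK2, adj_comm, eq_comm]

theorem neighbor_comparable (hH : IsThresholdGraph H) (u v : V) :
    (∀ w ≠ v, H.Adj u w → H.Adj v w) ∨ (∀ w ≠ u, H.Adj v w → H.Adj u w) := by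
  by_contra! ⟨⟨b, hbv, hub, hvb⟩, ⟨a, hau, hva, hua⟩⟩
  exact hH.not_alternating hau.symm hbv.symm hub hva hua hvb

theorem adj_of_degree_le [Fintype V] [DecidableRel H.Adj] (hH : IsThresholdGraph H)
    {u v w : V} (hdeg : H.degree v ≤ H.degree u) (hwu : w ≠ u) (hvw : H.Adj v w) :
    H.Adj u w := by
  classical
  refine (hH.neighbor_comparable u v).elim (fun hsub => ?_) (· w hwu hvw)
  have hsub' : (H.neighborFinset u).erase v ⊆ (H.neighborFinset v).erase u := by
    intro x hx
    simp only [Finset.mem_erase, mem_neighborFinset] at hx ⊢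
    exact ⟨hx.2.ne', hsub x hx.1 hx.2⟩
  have hcard : ((H.neighborFinset v).erase u).card ≤ ((H.neighborFinset u).erase v).card := by
    simp only [Finset.card_erase_eq_ite, card_neighborFinset_eq_degree, mem_neighborFinset,
      H.adj_comm v u]
    split_ifs <;> omega
  have hw : w ∈ (H.neighborFinset v).erase u := by simp [hwu, hvw]
  rw [← Finset.eq_of_subset_of_card_le hsub' hcard] at hw
  simpa using (Finset.mem_of_mem_erase hw)

theorem exists_forall_adj [Fintype V] [Nonempty V] (hH : IsThresholdGraph H)
    (h : ∀ z, ∃ w, H.Adj z w) : ∃ ω, ∀ z ≠ ω, H.Adj ω z := by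
  classical
  obtain ⟨ω, hω⟩ := Finite.exists_max (H.degree ·)
  refine ⟨ω, fun z hzω => ?_⟩
  obtain ⟨w, hzw⟩ := h z
  obtain rfl | hwω := eq_or_ne w ω
  · exact hzw.symm
  · exact hH.adj_of_degree_le (hω w) hzω hzw.symm

end IsThresholdGraph

/-- A nonempty partitioned `k`-probe threshold graph has an isolated vertex or a probe
universal vertex. -/
theorem partitioned_has_isolated_or_probe_universal {V : Type*} [Fintype V] [Nonempty V]
    (G : SimpleGraph V) {k : ℕ} (N : Fin k → Set V)
    (h : PartitionedKProbeThreshold G N) :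
    (∃ x : V, ∀ y, ¬ G.Adj x y) ∨
    (∃ ω : V, ∀ z, z ≠ ω → ¬ G.Adj ω z → ∃ i, ω ∈ N i ∧ z ∈ N i) := by
  obtain ⟨-, H, hH, hGH, hextra⟩ := h
  refine or_iff_not_imp_left.2 fun hiso => ?_
  push Not at hiso
  obtain ⟨ω, hω⟩ := hH.exists_forall_adj fun z => (hiso z).imp fun _ => (hGH ·)
  exact ⟨ω, fun z hzω => hextra ω z (hω z hzω)⟩
end
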